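/- arXiv:1208.1007 — 7 statements merged into one kernel-verified Lean document; each statement's English description precedes it below -/
import Mathlib

section
/- Let $k$ be a field with $\mathrm{char}(k) \neq 2$, let $f(x)$ be a monic separable polynomial of degree $2n+1$ over $k$, let $L = k[x]/(f(x))$ with $\beta$ the image of $x$, and equip $L$ with the bilinear form $(\lambda,\nu) = \mathrm{Tr}_{L/k}(\lambda\nu/f'(\beta))$. Then the $k$-subspace $M$ of $L$ spanned by $\{1, \beta, \beta^2, \ldots, \beta^{n-1}\}$ is an isotropic subspace of dimension $n$ for this form, and moreover $\beta \cdot M \subseteq M^{\perp}$, where $M^\perp$ is the orthogonal complement of $M$. -/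
/-! Euler's formula: writing `f = (X - β) * ∑ cᵢ Xⁱ` over `L`, the functional
`z ↦ [β^(d-1)] (cᵢ z)` is the `i`-th coordinate in the power basis, hence
`Tr z = ∑ᵢ [βⁱ] (βⁱ z) = [β^(d-1)] ((∑ᵢ cᵢ βⁱ) z) = [β^(d-1)] (f'(β) z)`, where `d = 2n + 1`.
So `(λ, ν)` is the coefficient of `β^(2n)` in `λν`, and it vanishes on `M × M` and on `βM × M`
because those products are polynomials in `β` of degree at most `2n - 1`. -/

open Polynomial AdjoinRoot

theorem LinearMap.apply_apply_eq_zero_of_mem_span {R M N P : Type*} [CommSemiring R]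
    [AddCommMonoid M] [AddCommMonoid N] [AddCommMonoid P] [Module R M] [Module R N] [Module R P]
    (B : M →ₗ[R] N →ₗ[R] P) {s : Set M} {t : Set N} (hB : ∀ a ∈ s, ∀ b ∈ t, B a b = 0)
    {x : M} {y : N} (hx : x ∈ Submodule.span R s) (hy : y ∈ Submodule.span R t) : B x y = 0 := by
  have h := Submodule.apply_mem_map₂ B hx hy
  rwa [Submodule.map₂_span_span, Submodule.span_eq_bot.mpr, Submodule.mem_bot] at h
  rintro _ ⟨a, ha, b, hb, rfl⟩
  exact hB a ha b hb

namespace AdjoinRoot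

variable {k : Type*} [Field k] {f : k[X]}

theorem minpoly_root_of_monic (hf : f.Monic) : minpoly k (root f) = f := by
  rw [minpoly_root hf.ne_zero, hf.leadingCoeff, inv_one, map_one, mul_one]

theorem natDegree_minpolyDiv_root (hf : f.Monic) (hd : 0 < f.natDegree) :
    (minpolyDiv k (root f)).natDegree = f.natDegree - 1 := by
  have : Nontrivial (AdjoinRoot f) :=
    AdjoinRoot.nontrivial f (by rw [degree_eq_natDegree hf.ne_zero]; exact_mod_cast hd.ne')
  have h := natDegree_minpolyDiv_succ (isIntegral_root' hf)
  rw [minpoly_root_of_monic hf] at h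
  omega

theorem powerBasisAux'_eq_pow (hf : f.Monic) (i : Fin f.natDegree) :
    powerBasisAux' hf i = root f ^ (i : ℕ) :=
  (powerBasis' hf).basis_eq_pow i

theorem modByMonicHom_mk_of_degree_lt (hf : f.Monic) {p : k[X]} (hp : p.degree < f.degree) :
    modByMonicHom hf (mk f p) = p := by
  rw [modByMonicHom_mk, (modByMonic_eq_self_iff hf).mpr hp]

theorem degree_modByMonicHom_lt (hf : f.Monic) (z : AdjoinRoot f) :
    (modByMonicHom hf z).degree < f.degree := by
  obtain ⟨p, rfl⟩ := mk_surjective z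
  rw [modByMonicHom_mk]
  exact degree_modByMonic_lt p hf

theorem modByMonicHom_root_mul (hf : f.Monic) (hd : 0 < f.natDegree) (z : AdjoinRoot f) :
    modByMonicHom hf (root f * z) =
      X * modByMonicHom hf z - C ((modByMonicHom hf z).coeff (f.natDegree - 1)) * f := by
  set p := modByMonicHom hf z
  set c := p.coeff (f.natDegree - 1)
  have hp : p.degree < f.natDegree := by
    rw [← degree_eq_natDegree hf.ne_zero]; exact degree_modByMonicHom_lt hf z
  have hz : root f * z = mk f (X * p - C c * f) := by
    rw [map_sub, map_mul (mk f) (C c), mk_self, mul_zero, sub_zero, map_mul, mk_X,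
      mk_leftInverse hf z]
  rw [hz]
  refine modByMonicHom_mk_of_degree_lt hf ?_
  rw [degree_eq_natDegree hf.ne_zero, degree_lt_iff_coeff_zero]
  intro m hm
  obtain ⟨m, rfl⟩ : ∃ m', m = m' + 1 := ⟨m - 1, by omega⟩
  rw [coeff_sub, coeff_X_mul, coeff_C_mul]
  rcases (show f.natDegree ≤ m + 1 by exact_mod_cast hm).eq_or_lt with heq | hlt
  · rw [← heq, hf.coeff_natDegree, mul_one, show m = f.natDegree - 1 by omega, sub_self]
  · rw [coeff_eq_zero_of_degree_lt (hp.trans_le (by exact_mod_cast (by omega : f.natDegree ≤ m))),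
      coeff_eq_zero_of_natDegree_lt hlt, mul_zero, sub_zero]

theorem coeff_modByMonicHom_root_mul (hf : f.Monic) (hd : 0 < f.natDegree) (z : AdjoinRoot f)
    (i : ℕ) :
    (modByMonicHom hf (root f * z)).coeff (i + 1) =
      (modByMonicHom hf z).coeff i -
        (modByMonicHom hf z).coeff (f.natDegree - 1) * f.coeff (i + 1) := by
  rw [modByMonicHom_root_mul hf hd, coeff_sub, coeff_X_mul, coeff_C_mul]

/-- Downward induction on `i`: the coefficients of `f / (X - root f)` satisfy
`c i = f.coeff (i + 1) + c (i + 1) * root f`, which cancels against `coeff_modByMonicHom_root_mul`. -/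
theorem coeff_modByMonicHom_coeff_minpolyDiv_mul (hf : f.Monic) (hd : 0 < f.natDegree) {i : ℕ}
    (hi : i ≤ f.natDegree - 1) (z : AdjoinRoot f) :
    (modByMonicHom hf ((minpolyDiv k (root f)).coeff i * z)).coeff (f.natDegree - 1) =
      (modByMonicHom hf z).coeff i := by
  induction hi using Nat.decreasingInduction generalizing z with
  | self =>
    have h := (minpolyDiv_monic (isIntegral_root' hf)).coeff_natDegree
    rw [natDegree_minpolyDiv_root hf hd] at h
    rw [h, one_mul]
  | of_succ i hi ih =>
    rw [coeff_minpolyDiv, minpoly_root_of_monic hf, add_mul, map_add, coeff_add,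
      ← Algebra.smul_def, map_smul, coeff_smul, smul_eq_mul, mul_assoc, ih,
      coeff_modByMonicHom_root_mul hf hd]
    ring

theorem trace_eq_coeff_modByMonicHom_derivative_mul (hf : f.Monic) (hd : 0 < f.natDegree)
    (w : AdjoinRoot f) :
    Algebra.trace k (AdjoinRoot f) w =
      (modByMonicHom hf (aeval (root f) (derivative f) * w)).coeff (f.natDegree - 1) := by
  classical
  set c := (minpolyDiv k (root f)).coeff
  let b := powerBasisAux' hf
  have hdiag (i : Fin f.natDegree) : Algebra.leftMulMatrix b w i i =
      (modByMonicHom hf (c i * root f ^ (i : ℕ) * w)).coeff (f.natDegree - 1) := by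
    rw [Algebra.leftMulMatrix_eq_repr_mul, mul_assoc,
      coeff_modByMonicHom_coeff_minpolyDiv_mul hf hd (by omega), powerBasisAux'_eq_pow, mul_comm]
    exact powerBasisAux'_repr_apply_to_fun hf _ i
  have heval : ∑ i : Fin f.natDegree, c i * root f ^ (i : ℕ) = aeval (root f) (derivative f) := by
    rw [Fin.sum_univ_eq_sum_range (fun i => c i * root f ^ i), ← eval_eq_sum_range'
      (by rw [natDegree_minpolyDiv_root hf hd]; omega), eval_minpolyDiv_self,
      minpoly_root_of_monic hf]
  rw [Algebra.trace_eq_matrix_trace b, Matrix.trace, ← heval, Finset.sum_mul, map_sum,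
    finsetSum_coeff]
  exact Finset.sum_congr rfl fun i _ => hdiag i

theorem trace_root_pow_mul_eq_zero (hf : f.Monic) {u : AdjoinRoot f}
    (hu : u * aeval (root f) (derivative f) = 1) {m : ℕ} (hm : m + 1 < f.natDegree) :
    Algebra.trace k (AdjoinRoot f) (root f ^ m * u) = 0 := by
  rw [trace_eq_coeff_modByMonicHom_derivative_mul hf (by omega), mul_left_comm, mul_comm _ u, hu,
    mul_one, ← mk_X, ← map_pow, modByMonicHom_mk_of_degree_lt hf, coeff_X_pow, if_neg (by omega)]
  rw [degree_X_pow, degree_eq_natDegree hf.ne_zero]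
  exact_mod_cast (by omega : m < f.natDegree)

theorem finrank_span_root_pow (hf : f.Monic) {n : ℕ} (hn : n ≤ f.natDegree) :
    Module.finrank k (Submodule.span k (Set.range fun i : Fin n => root f ^ (i : ℕ))) = n := by
  have hli := (powerBasisAux' hf).linearIndependent.comp _ (Fin.castLE_injective hn)
  simp only [Function.comp_def, powerBasisAux'_eq_pow, Fin.val_castLE] at hli
  rw [finrank_span_eq_card hli, Fintype.card_fin]

end AdjoinRoot

theorem stmt1_general (n : ℕ) (k : Type*) [Field k]
    (f : Polynomial k) (hf : f.Monic)
    (hdeg : f.natDegree = 2 * n + 1)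
    (u : AdjoinRoot f)
    (hu : u * Polynomial.aeval (AdjoinRoot.root f) (Polynomial.derivative f) = 1)
    (M : Submodule k (AdjoinRoot f))
    (hM : M = Submodule.span k (Set.range fun i : Fin n => (AdjoinRoot.root f) ^ (i : ℕ))) :
    Module.finrank k M = n ∧
    (∀ x ∈ M, ∀ y ∈ M, Algebra.trace k (AdjoinRoot f) (x * y * u) = 0) ∧
    (∀ x ∈ M, ∀ y ∈ M,
      Algebra.trace k (AdjoinRoot f) ((AdjoinRoot.root f * x) * y * u) = 0) := by
  let B : AdjoinRoot f →ₗ[k] AdjoinRoot f →ₗ[k] k :=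
    (LinearMap.mul k _).compr₂ (Algebra.trace k _ ∘ₗ LinearMap.mulRight k u)
  have hB {a b : ℕ} (hab : a + b < 2 * n) : B (root f ^ a) (root f ^ b) = 0 := by
    simp only [B, LinearMap.compr₂_apply, LinearMap.comp_apply, LinearMap.mul_apply',
      LinearMap.mulRight_apply, ← pow_add]
    exact trace_root_pow_mul_eq_zero hf hu (by omega)
  subst hM
  refine ⟨finrank_span_root_pow hf (by omega), fun x hx y hy => ?_, fun x hx y hy => ?_⟩
  · refine B.apply_apply_eq_zero_of_mem_span ?_ hx hy
    rintro _ ⟨i, rfl⟩ _ ⟨j, rfl⟩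
    exact hB (by omega)
  · refine (B ∘ₗ LinearMap.mulLeft k (root f)).apply_apply_eq_zero_of_mem_span ?_ hx hy
    rintro _ ⟨i, rfl⟩ _ ⟨j, rfl⟩
    simpa only [LinearMap.comp_apply, LinearMap.mulLeft_apply, ← pow_succ'] using hB (by omega)

/-- For `L = k[x]/(f)` with `f` monic separable of degree `2n+1`, `β` the image of `x`,
and the bilinear form `(λ,ν) = Tr_{L/k}(λν/f'(β))` (with `u = f'(β)⁻¹`), the subspace
`M = span{1,β,…,β^{n-1}}` is isotropic of dimension `n`, and `β·M ⊆ M^⊥`. -/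
theorem stmt1 (n : ℕ) (k : Type*) [Field k] (hchar : (2 : k) ≠ 0)
    (f : Polynomial k) (hf : f.Monic) (hsep : f.Separable)
    (hdeg : f.natDegree = 2 * n + 1)
    (u : AdjoinRoot f)
    (hu : u * Polynomial.aeval (AdjoinRoot.root f) (Polynomial.derivative f) = 1)
    (M : Submodule k (AdjoinRoot f))
    (hM : M = Submodule.span k (Set.range fun i : Fin n => (AdjoinRoot.root f) ^ (i : ℕ))) :
    Module.finrank k M = n ∧
    (∀ x ∈ M, ∀ y ∈ M, Algebra.trace k (AdjoinRoot f) (x * y * u) = 0) ∧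
    (∀ x ∈ M, ∀ y ∈ M,
      Algebra.trace k (AdjoinRoot f) ((AdjoinRoot.root f * x) * y * u) = 0) :=
  stmt1_general n k f hf hdeg u hu M hM
end

section
/- Let $p$ be a prime with $p > 2n+1$. The number of monic separable polynomials $f(x) = x^{2n+1} + c_2 x^{2n-1} + \cdots + c_{2n+1}$ over $\mathbb{F}_p$ (i.e., with $x^{2n}$-coefficient zero and nonzero discriminant) that are reducible over $\mathbb{F}_p$ is $p^{2n} \cdot \frac{2n}{2n+1} + O(p^{2n-1})$, where the implied constant depends only on $n$. -/
/-!
Translating `X ↦ X + r` changes the coefficient of `X ^ 2n` of a monic polynomial of degree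
`2n + 1` by `(2n + 1) r`, and `2n + 1` is invertible mod `p`. So every translation-invariant
class of such polynomials is `p` times larger than its part with vanishing
`X ^ 2n`-coefficient, and it suffices to count separable reducible monic polynomials of degree
`d = 2n + 1` without that restriction, i.e. `p ^ d` minus the non-squarefree and the irreducible
ones. At most `n p ^ (d - 1)` are not squarefree (each is `g ^ 2 h` with `g, h` monic and
`deg g ≤ n`). Counting elements of `𝔽_{p^d}` by their minimal polynomials, `d` times the number of
irreducibles is `p ^ d` minus the number of elements lying in a proper subfield, which is at most
`n p ^ n`.
-/

open Polynomial Module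

theorem Nat.le_div_two_of_dvd_of_ne {e d : ℕ} (h : e ∣ d) (hne : e ≠ d) (hd : 0 < d) :
    e ≤ d / 2 := by
  obtain ⟨c, rfl⟩ := h
  have hc : 2 ≤ c := by
    rcases c with _ | _ | c
    · simp at hd
    · simp at hne
    · omega
  rw [Nat.le_div_iff_mul_le two_pos]
  exact Nat.mul_le_mul_left e hc

theorem Nat.card_subtype_eq_add_of_iff {α : Type*} {p q r : α → Prop} [Finite {x // p x}]
    (h : ∀ x, p x ↔ q x ∨ r x) (hqr : ∀ x, q x → ¬r x) :
    Nat.card {x // p x} = Nat.card {x // q x} + Nat.card {x // r x} := by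
  have hunion : {x | p x} = {x | q x} ∪ {x | r x} := Set.ext h
  have hfin : ({x | q x} ∪ {x | r x}).Finite := hunion ▸ Set.finite_coe_iff.mp ‹_›
  exact (congrArg Set.ncard hunion).trans (Set.ncard_union_eq (Set.disjoint_left.mpr hqr)
    (hfin.subset Set.subset_union_left) (hfin.subset Set.subset_union_right))

namespace Polynomial

section Monic

variable {R : Type*} [Ring R] [Nontrivial R]

theorem natCard_monic_natDegree_eq (d : ℕ) :
    Nat.card {f : R[X] // f.Monic ∧ f.natDegree = d} = Nat.card R ^ d := by
  rw [Nat.card_congr ((monicEquivDegreeLT d).trans (degreeLTEquiv R d).toEquiv), Nat.card_fun,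
    Nat.card_fin]

instance finite_monic_natDegree_eq [Finite R] (d : ℕ) :
    Finite {f : R[X] // f.Monic ∧ f.natDegree = d} :=
  .of_equiv _ ((monicEquivDegreeLT d).trans (degreeLTEquiv R d).toEquiv).symm

instance finite_monic_natDegree_eq_and [Finite R] (d : ℕ) (P : R[X] → Prop) :
    Finite {f : R[X] // f.Monic ∧ f.natDegree = d ∧ P f} :=
  .of_injective (fun f ↦ (⟨f.1, f.2.1, f.2.2.1⟩ : {f : R[X] // f.Monic ∧ f.natDegree = d}))
    fun _ _ h ↦ Subtype.ext (congrArg Subtype.val h :)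

end Monic

section Taylor

variable {R : Type*} [CommRing R]

theorem Monic.taylor {f : R[X]} (hf : f.Monic) (r : R) : (Polynomial.taylor r f).Monic := by
  rw [Monic, leadingCoeff_taylor, hf.leadingCoeff]

theorem Separable.taylor {f : R[X]} (hf : f.Separable) (r : R) :
    (Polynomial.taylor r f).Separable := by
  have : derivative (Polynomial.taylor r f) = Polynomial.taylor r (derivative f) := by
    simp [taylor_apply, derivative_comp]
  rw [Separable, this]
  exact IsCoprime.map hf (taylorAlgHom r).toRingHom

theorem irreducible_taylor_iff {f : R[X]} (r : R) : Irreducible (taylor r f) ↔ Irreducible f :=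
  MulEquiv.irreducible_iff (taylorEquiv r)

theorem Monic.coeff_taylor_of_natDegree_eq_succ {f : R[X]} {d : ℕ} (hf : f.Monic)
    (hd : f.natDegree = d + 1) (r : R) :
    (Polynomial.taylor r f).coeff d = f.coeff d + (d + 1) * r := by
  have hlin : (hasseDeriv d f).natDegree ≤ 1 := (natDegree_hasseDeriv_le f d).trans (by omega)
  rw [taylor_coeff, eq_X_add_C_of_natDegree_le_one hlin]
  have hlead : f.coeff (d + 1) = 1 := hd ▸ hf.coeff_natDegree
  simp only [hasseDeriv_coeff, zero_add, add_comm 1 d, Nat.choose_succ_self_right, Nat.choose_self,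
    hlead, eval_add, eval_mul, eval_C, eval_X]
  push_cast
  ring

end Taylor

variable {K : Type*} [Field K]

noncomputable def monicShiftEquiv {d : ℕ} (hd : (d + 1 : K) ≠ 0) (P : K[X] → Prop)
    (hP : ∀ r f, P f → P (taylor r f)) :
    {f : K[X] // f.Monic ∧ f.natDegree = d + 1 ∧ P f} ≃
      K × {f : K[X] // f.Monic ∧ f.natDegree = d + 1 ∧ f.coeff d = 0 ∧ P f} where
  toFun f := (f.1.coeff d, ⟨taylor (-f.1.coeff d / (d + 1)) f.1, f.2.1.taylor _,
    by rw [natDegree_taylor, f.2.2.1],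
    by rw [f.2.1.coeff_taylor_of_natDegree_eq_succ f.2.2.1]; field_simp; ring, hP _ _ f.2.2.2⟩)
  invFun g := ⟨taylor (g.1 / (d + 1)) g.2.1, g.2.2.1.taylor _,
    by rw [natDegree_taylor, g.2.2.2.1], hP _ _ g.2.2.2.2.2⟩
  left_inv f := by
    ext1
    simp [taylor_taylor, neg_div]
  right_inv g := by
    have hcoeff : (taylor (g.1 / (d + 1)) g.2.1).coeff d = g.1 := by
      rw [g.2.2.1.coeff_taylor_of_natDegree_eq_succ g.2.2.2.1, g.2.2.2.2.1, zero_add]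
      field_simp
    ext : 1
    · exact hcoeff
    · ext1
      simp [hcoeff, taylor_taylor, neg_div]

theorem natCard_monic_eq_mul_natCard_coeff_eq_zero {d : ℕ} (hd : (d + 1 : K) ≠ 0)
    (P : K[X] → Prop) (hP : ∀ r f, P f → P (taylor r f)) :
    Nat.card {f : K[X] // f.Monic ∧ f.natDegree = d + 1 ∧ P f} =
      Nat.card K *
        Nat.card {f : K[X] // f.Monic ∧ f.natDegree = d + 1 ∧ f.coeff d = 0 ∧ P f} := by
  rw [Nat.card_congr (monicShiftEquiv hd P hP), Nat.card_prod]

theorem Monic.exists_sq_mul_of_not_squarefree {f : K[X]} (hf : f.Monic) (hsq : ¬Squarefree f) :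
    ∃ g h : K[X], g.Monic ∧ 0 < g.natDegree ∧ h.Monic ∧ f = g ^ 2 * h := by
  classical
  obtain ⟨x, ⟨c, hc⟩, hx⟩ : ∃ x, x * x ∣ f ∧ ¬IsUnit x := by
    simpa [Squarefree] using hsq
  have hx0 : x ≠ 0 := by rintro rfl; simp [hf.ne_zero] at hc
  have hg : (normalize x).Monic := monic_normalize hx0
  obtain ⟨h, rfl⟩ : normalize x ^ 2 ∣ f := by
    rw [sq, hc]
    exact ((normalize_associated x).mul_mul (normalize_associated x)).dvd.mul_right c
  refine ⟨normalize x, h, hg, ?_, (hg.pow 2).of_mul_monic_left hf, rfl⟩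
  rw [Nat.pos_iff_ne_zero, Ne, hg.natDegree_eq_zero, ← hg.isUnit_iff,
    (normalize_associated x).isUnit_iff]
  exact hx

variable [Finite K]

theorem natCard_monic_not_squarefree_le (d : ℕ) :
    Nat.card {f : K[X] // f.Monic ∧ f.natDegree = d ∧ ¬Squarefree f} ≤
      d / 2 * Nat.card K ^ (d - 1) := by
  let sqMul : (Σ k : Fin (d / 2), {g : K[X] // g.Monic ∧ g.natDegree = k + 1} ×
      {h : K[X] // h.Monic ∧ h.natDegree = d - 2 * (k + 1)}) → K[X] :=
    fun x ↦ x.2.1.1 ^ 2 * x.2.2.1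
  have hsub : {f : K[X] | f.Monic ∧ f.natDegree = d ∧ ¬Squarefree f} ⊆ Set.range sqMul := by
    rintro f ⟨hf, rfl, hsq⟩
    obtain ⟨g, h, hg, hg0, hh, rfl⟩ := hf.exists_sq_mul_of_not_squarefree hsq
    have hdeg : (g ^ 2 * h).natDegree = 2 * g.natDegree + h.natDegree := by
      rw [(hg.pow 2).natDegree_mul hh, hg.natDegree_pow]
    exact ⟨⟨⟨g.natDegree - 1, by omega⟩, ⟨g, hg, by dsimp only; omega⟩,
      ⟨h, hh, by dsimp only; omega⟩⟩, rfl⟩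
  calc Nat.card {f : K[X] // f.Monic ∧ f.natDegree = d ∧ ¬Squarefree f}
      ≤ Nat.card (Set.range sqMul) := Nat.card_mono (Set.finite_range sqMul) hsub
    _ ≤ ∑ k : Fin (d / 2), Nat.card K ^ (k + 1 : ℕ) * Nat.card K ^ (d - 2 * (k + 1 : ℕ)) := by
      refine (Finite.card_range_le sqMul).trans_eq ?_
      simp [Nat.card_sigma, Nat.card_prod, natCard_monic_natDegree_eq]
    _ ≤ ∑ _k : Fin (d / 2), Nat.card K ^ (d - 1) := by
      gcongr with k
      rw [← pow_add]
      exact Nat.pow_le_pow_right Nat.card_pos (by omega)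
    _ = d / 2 * Nat.card K ^ (d - 1) := by simp

theorem natCard_monic_eq_add (d : ℕ) :
    Nat.card {f : K[X] // f.Monic ∧ f.natDegree = d} =
      Nat.card {f : K[X] // f.Monic ∧ f.natDegree = d ∧ ¬Squarefree f} +
      (Nat.card {f : K[X] // f.Monic ∧ f.natDegree = d ∧ Irreducible f} +
        Nat.card {f : K[X] // f.Monic ∧ f.natDegree = d ∧ f.Separable ∧ ¬Irreducible f}) := by
  have hsep {f : K[X]} : f.Separable ↔ Squarefree f := PerfectField.separable_iff_squarefree
  have hsplit₁ : Nat.card {f : K[X] // f.Monic ∧ f.natDegree = d} =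
      Nat.card {f : K[X] // f.Monic ∧ f.natDegree = d ∧ ¬Squarefree f} +
        Nat.card {f : K[X] // f.Monic ∧ f.natDegree = d ∧ Squarefree f} :=
    Nat.card_subtype_eq_add_of_iff (fun f ↦ by tauto) (fun f ↦ by tauto)
  have hsplit₂ : Nat.card {f : K[X] // f.Monic ∧ f.natDegree = d ∧ Squarefree f} =
      Nat.card {f : K[X] // f.Monic ∧ f.natDegree = d ∧ Irreducible f} +
        Nat.card {f : K[X] // f.Monic ∧ f.natDegree = d ∧ f.Separable ∧ ¬Irreducible f} :=
    Nat.card_subtype_eq_add_of_iff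
      (fun f ↦ by have := @Irreducible.squarefree _ _ f; rw [hsep]; tauto) (fun f ↦ by tauto)
  rw [hsplit₁, hsplit₂]

section Irreducible

variable {L : Type*} [Field L] [Finite L] [Algebra K L]

theorem Irreducible.splits_of_natDegree_dvd_finrank {f : K[X]} (hf : Irreducible f)
    (h : f.natDegree ∣ finrank K L) : (f.map (algebraMap K L)).Splits := by
  have := Fintype.ofFinite L
  have hsplit : ((X ^ Nat.card K ^ finrank K L - X : K[X]).map (algebraMap K L)).Splits := by
    rw [← Module.natCard_eq_pow_finrank, Nat.card_eq_fintype_card]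
    exact (FiniteField.isSplittingField_sub L K).splits
  have hne : (X ^ Nat.card K ^ finrank K L - X : K[X]) ≠ 0 :=
    FiniteField.X_pow_card_pow_sub_X_ne_zero K finrank_pos.ne' Finite.one_lt_card
  exact hsplit.of_dvd (map_ne_zero hne)
    (map_dvd (algebraMap K L) (hf.natDegree_dvd_iff_dvd_X_pow_card_pow_sub_X.mp h))

theorem Irreducible.card_rootSet_eq_finrank {f : K[X]} (hf : Irreducible f)
    (hd : f.natDegree = finrank K L) : Fintype.card (f.rootSet L) = finrank K L :=
  hd ▸ card_rootSet_eq_natDegree (PerfectField.separable_of_irreducible hf)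
    (hf.splits_of_natDegree_dvd_finrank (hd ▸ dvd_rfl))

variable (K L) in
theorem finrank_mul_natCard_monic_irreducible :
    finrank K L * Nat.card {f : K[X] // f.Monic ∧ f.natDegree = finrank K L ∧ Irreducible f} =
      Nat.card {x : L // (minpoly K x).natDegree = finrank K L} := by
  have := Fintype.ofFinite {f : K[X] // f.Monic ∧ f.natDegree = finrank K L ∧ Irreducible f}
  let μ (x : {x : L // (minpoly K x).natDegree = finrank K L}) :
      {f : K[X] // f.Monic ∧ f.natDegree = finrank K L ∧ Irreducible f} :=
    ⟨minpoly K x.1, minpoly.monic (.of_finite K x.1), x.2, minpoly.irreducible (.of_finite K x.1)⟩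
  have hfiber (f) : Nat.card {x // μ x = f} = finrank K L := by
    have hμ {x : L} (hx : x ∈ f.1.rootSet L) : minpoly K x = f.1 :=
      (minpoly.eq_of_irreducible_of_monic f.2.2.2 (mem_rootSet.mp hx).2 f.2.1).symm
    refine (Nat.card_congr ?_).trans
      ((Nat.card_eq_fintype_card).trans (f.2.2.2.card_rootSet_eq_finrank f.2.2.1))
    exact
      { toFun x := ⟨x.1.1, mem_rootSet.mpr
          ⟨f.2.1.ne_zero, congrArg Subtype.val x.2 ▸ minpoly.aeval K x.1.1⟩⟩
        invFun y := ⟨⟨y.1, (hμ y.2).symm ▸ f.2.2.1⟩, Subtype.ext (hμ y.2)⟩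
        left_inv _ := rfl
        right_inv _ := rfl }
  rw [← Nat.card_congr (Equiv.sigmaFiberEquiv μ), Nat.card_sigma]
  simp [hfiber, mul_comm]

variable (K L) in
theorem natCard_minpoly_natDegree_ne_le :
    Nat.card {x : L // (minpoly K x).natDegree ≠ finrank K L} ≤
      finrank K L / 2 * Nat.card K ^ (finrank K L / 2) := by
  set d := finrank K L
  set q := Nat.card K
  have hsub : {x : L | (minpoly K x).natDegree ≠ d} ⊆
      ⋃ e ∈ Finset.Icc 1 (d / 2), (X ^ q ^ e - X : K[X]).rootSet L := by
    intro x hx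
    have hint := IsIntegral.of_finite K x
    have hpos := minpoly.natDegree_pos hint
    refine Set.mem_biUnion (x := (minpoly K x).natDegree) (Finset.mem_coe.mpr (Finset.mem_Icc.mpr
      ⟨hpos, Nat.le_div_two_of_dvd_of_ne (minpoly.degree_dvd hint) hx finrank_pos⟩)) ?_
    refine mem_rootSet.mpr
      ⟨FiniteField.X_pow_card_pow_sub_X_ne_zero K hpos.ne' Finite.one_lt_card, ?_⟩
    exact minpoly.dvd_iff.mp
      ((minpoly.irreducible hint).natDegree_dvd_iff_dvd_X_pow_card_pow_sub_X.mp dvd_rfl)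
  calc Nat.card {x : L // (minpoly K x).natDegree ≠ d}
      ≤ (⋃ e ∈ Finset.Icc 1 (d / 2), (X ^ q ^ e - X : K[X]).rootSet L).ncard :=
        Set.ncard_le_ncard hsub
    _ ≤ ∑ e ∈ Finset.Icc 1 (d / 2), ((X ^ q ^ e - X : K[X]).rootSet L).ncard :=
        Finset.set_ncard_biUnion_le _ _
    _ ≤ ∑ e ∈ Finset.Icc 1 (d / 2), q ^ (d / 2) := by
        refine Finset.sum_le_sum fun e he ↦ (ncard_rootSet_le _ L).trans ?_
        rw [FiniteField.X_pow_card_pow_sub_X_natDegree_eq K (by grind) Finite.one_lt_card]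
        exact Nat.pow_le_pow_right Finite.card_pos (Finset.mem_Icc.mp he).2
    _ = d / 2 * q ^ (d / 2) := by simp

end Irreducible

theorem natCard_monic_irreducible_bounds {d : ℕ} (hd : d ≠ 0) :
    d * Nat.card {f : K[X] // f.Monic ∧ f.natDegree = d ∧ Irreducible f} ≤ Nat.card K ^ d ∧
      Nat.card K ^ d ≤
        d * Nat.card {f : K[X] // f.Monic ∧ f.natDegree = d ∧ Irreducible f} +
          d / 2 * Nat.card K ^ (d / 2) := by
  obtain ⟨p, _⟩ := CharP.exists K
  have : Fact p.Prime := ⟨CharP.char_is_prime K p⟩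
  have : NeZero d := ⟨hd⟩
  let L := FiniteField.Extension K p d
  have hirr := finrank_mul_natCard_monic_irreducible K L
  have hsmall := natCard_minpoly_natDegree_ne_le K L
  have hsplit : Nat.card {x : L // (minpoly K x).natDegree = finrank K L} +
      Nat.card {x : L // (minpoly K x).natDegree ≠ finrank K L} = Nat.card L :=
    Set.ncard_add_ncard_compl {x : L | (minpoly K x).natDegree = finrank K L}
  rw [FiniteField.finrank_extension] at hirr hsmall hsplit
  rw [FiniteField.natCard_extension] at hsplit
  omega

end Polynomial

theorem abs_sub_le_of_counts {q n N A I : ℕ} (hq : 0 < q)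
    (hpart : q ^ (2 * n + 1) = A + I + q * N) (hA : A ≤ n * q ^ (2 * n))
    (hI : (2 * n + 1) * I ≤ q ^ (2 * n + 1))
    (hI' : q ^ (2 * n + 1) ≤ (2 * n + 1) * I + n * q ^ n) :
    |(N : ℝ) - (q : ℝ) ^ (2 * n) * ((2 * n : ℝ) / (2 * n + 1))| ≤
      n * (q : ℝ) ^ (2 * n - 1) := by
  have hexpand :
      ((N : ℝ) - (q : ℝ) ^ (2 * n) * ((2 * n : ℝ) / (2 * n + 1))) * ((2 * n + 1) * q) =
        ((q : ℝ) ^ (2 * n + 1) - (2 * n + 1) * I) - (2 * n + 1) * A := by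
    have := congrArg (Nat.cast (R := ℝ)) hpart
    push_cast at this
    field_simp
    linear_combination (-(2 * n + 1) : ℝ) * this
  set E : ℝ := (N : ℝ) - (q : ℝ) ^ (2 * n) * ((2 * n : ℝ) / (2 * n + 1))
  have hA' : (2 * n + 1 : ℝ) * A ≤ (2 * n + 1) * (n * (q : ℝ) ^ (2 * n)) := by
    gcongr
    exact_mod_cast hA
  have hI₁ : (2 * n + 1 : ℝ) * I ≤ (q : ℝ) ^ (2 * n + 1) := by exact_mod_cast hI
  have hI₂ : (q : ℝ) ^ (2 * n + 1) ≤ (2 * n + 1) * I + n * (q : ℝ) ^ (2 * n) := by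
    exact_mod_cast hI'.trans (Nat.add_le_add_left
      (Nat.mul_le_mul_left n (Nat.pow_le_pow_right hq (by omega))) _)
  have hnQ : (n : ℝ) * (q : ℝ) ^ (2 * n) ≤ (2 * n + 1) * (n * (q : ℝ) ^ (2 * n)) :=
    le_mul_of_one_le_left (by positivity) (by linarith [(n.cast_nonneg : (0 : ℝ) ≤ n)])
  have hdq : (0 : ℝ) < (2 * n + 1) * q := by positivity
  have hrhs : (n : ℝ) * (q : ℝ) ^ (2 * n) = n * (q : ℝ) ^ (2 * n - 1) * q := by
    rcases n with _ | n
    · simp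
    · rw [mul_assoc, ← pow_succ]; congr 2
  refine le_of_mul_le_mul_right ?_ hdq
  calc |E| * ((2 * n + 1) * q) = |E * ((2 * n + 1) * q)| := by rw [abs_mul, abs_of_pos hdq]
    _ ≤ (2 * n + 1) * (n * (q : ℝ) ^ (2 * n)) := by
      rw [hexpand, abs_le]
      constructor <;> linarith [(by positivity : (0 : ℝ) ≤ (2 * n + 1) * A)]
    _ = n * (q : ℝ) ^ (2 * n - 1) * ((2 * n + 1) * q) := by rw [hrhs]; ring

/-- For primes `p > 2n+1`, the number of monic separable polynomials
`x^{2n+1} + c₂x^{2n-1} + ⋯ + c_{2n+1}` over `F_p` that are reducible is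
`p^{2n}·(2n/(2n+1)) + O(p^{2n-1})`, with implied constant depending only on `n`. -/
theorem stmt4 (n : ℕ) :
    ∃ C : ℝ, ∀ p : ℕ, p.Prime → p > 2 * n + 1 →
      |(Nat.card {f : Polynomial (ZMod p) // f.Monic ∧ f.natDegree = 2 * n + 1 ∧
          f.coeff (2 * n) = 0 ∧ f.Separable ∧ ¬ Irreducible f} : ℝ) -
        (p : ℝ) ^ (2 * n) * ((2 * n : ℝ) / (2 * n + 1))| ≤ C * (p : ℝ) ^ (2 * n - 1) := by
  refine ⟨n, fun p hp hpn => ?_⟩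
  have := Fact.mk hp
  have hd : ((2 * n : ℕ) + 1 : ZMod p) ≠ 0 := by
    rw [← Nat.cast_add_one, Ne, ZMod.natCast_eq_zero_iff]
    exact Nat.not_dvd_of_pos_of_lt (by omega) hpn
  have hshift := natCard_monic_eq_mul_natCard_coeff_eq_zero hd
    (fun f ↦ f.Separable ∧ ¬Irreducible f)
    fun r f ⟨hsep, hirr⟩ ↦ ⟨hsep.taylor r, (irreducible_taylor_iff r).not.mpr hirr⟩
  have hpart := natCard_monic_eq_add (K := ZMod p) (2 * n + 1)
  have hA := natCard_monic_not_squarefree_le (K := ZMod p) (2 * n + 1)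
  obtain ⟨hI, hI'⟩ := natCard_monic_irreducible_bounds (K := ZMod p) (d := 2 * n + 1) (by omega)
  rw [natCard_monic_natDegree_eq, hshift] at hpart
  simp only [Nat.card_zmod, show (2 * n + 1) / 2 = n by omega, Nat.add_sub_cancel]
    at hpart hA hI hI'
  exact abs_sub_le_of_counts hp.pos (by omega) hA hI hI'
end

section
/- Let $B$ be a symmetric $(2n+1) \times (2n+1)$ matrix over a field $k$ of characteristic not $2$, and let $A$ be the anti-diagonal matrix with $1$'s on the anti-diagonal. Suppose that for some $k_0 \in \{1,\ldots,n\}$, the top-left $k_0 \times (2n+1-k_0)$ block of entries of $B$ are all zero. Then the discriminant of the polynomial $\det(Ax - B)$ in $x$ is zero. -/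
/-!
Reorder the indices as `[0, k₀) ⊔ [k₀, 2n+1-k₀) ⊔ [2n+1-k₀, 2n+1)`. In these blocks the symmetric
matrix `M = Ax - B` is block anti-triangular, with outer anti-diagonal blocks `P` and `Pᵀ`, so
`det P ^ 2` divides `det M`. On the block `P` the matrix `A` is the `k₀ × k₀` anti-identity, so
`det P` has degree `k₀ ≥ 1` and `det M` is not squarefree.
-/

open Polynomial

namespace Matrix

variable {R : Type*} [CommRing R]

theorem det_submatrix_sq_dvd_det_of_isSymm {α β : Type*} [Fintype α] [Fintype β] [DecidableEq α]
    [DecidableEq β] (M : Matrix (α ⊕ β ⊕ α) (α ⊕ β ⊕ α) R)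
    (hM : M.IsSymm) (h₁ : ∀ a a', M (.inl a) (.inl a') = 0)
    (h₂ : ∀ a b, M (.inl a) (.inr (.inl b)) = 0) :
    (M.submatrix Sum.inl (Sum.inr ∘ Sum.inr)).det ^ 2 ∣ M.det := by
  set P := M.submatrix Sum.inl (Sum.inr ∘ Sum.inr)
  let r : Equiv.Perm (α ⊕ β ⊕ α) :=
    (Equiv.sumComm _ _).trans ((Equiv.sumCongr (Equiv.sumComm _ _) (Equiv.refl _)).trans
      (Equiv.sumAssoc _ _ _))
  -- Moving the last block of columns to the front makes `M` block lower triangular.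
  have hblocks : M.submatrix id r = fromBlocks P 0 (M.submatrix Sum.inr (Sum.inr ∘ Sum.inr))
      (fromBlocks (M.submatrix (Sum.inr ∘ Sum.inl) (Sum.inr ∘ Sum.inl)) 0
        (M.submatrix (Sum.inr ∘ Sum.inr) (Sum.inr ∘ Sum.inl)) Pᵀ) := by
    ext (a | b | c) (a' | b' | c')
    all_goals first
      | rfl
      | exact h₂ _ _
      | exact h₁ _ _
      | exact (hM.apply _ _).trans (h₂ _ _)
      | exact hM.apply _ _
  have hdet : (Equiv.Perm.sign r : R) * M.det = P.det ^ 2 *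
      (M.submatrix (Sum.inr ∘ Sum.inl) (Sum.inr ∘ Sum.inl)).det := by
    rw [← det_permute', hblocks, det_fromBlocks_zero₁₂, det_fromBlocks_zero₁₂, det_transpose]
    ring
  have hunit : IsUnit (Equiv.Perm.sign r : R) := (Equiv.Perm.sign r).isUnit.map (Int.castRingHom R)
  exact (hunit.dvd_mul_left).mp (Dvd.intro _ hdet.symm)

theorem natDegree_det_X_smul_submatrix_one_sub {n : Type*} [Fintype n] [DecidableEq n]
    [Nontrivial R] (σ : Equiv.Perm n) (B : Matrix n n R) :
    ((X : R[X]) • ((1 : Matrix n n R).submatrix σ id).map C - B.map C).det.natDegree =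
      Fintype.card n := by
  set N := (X : R[X]) • ((1 : Matrix n n R).submatrix σ id).map C - B.map C
  have hN : N.submatrix σ.symm id = (B.submatrix σ.symm id).charmatrix := by
    ext i j
    by_cases hij : i = j
    · subst hij; simp [N, one_apply]
    · simp [N, hij]
  have hcharpoly : (B.submatrix σ.symm id).charpoly = C (Equiv.Perm.sign σ.symm : R) * N.det := by
    rw [charpoly, ← hN, det_permute, map_intCast]
  have hunit : IsUnit (Equiv.Perm.sign σ.symm : R) :=
    (Equiv.Perm.sign σ.symm).isUnit.map (Int.castRingHom R)
  rw [← natDegree_C_mul_of_isUnit hunit, ← hcharpoly, charpoly_natDegree_eq_dim]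

end Matrix

theorem stmt6_general (n : ℕ) (k : Type*) [Field k]
    (A B : Matrix (Fin (2 * n + 1)) (Fin (2 * n + 1)) k)
    (hA : ∀ i j, A i j = if (i : ℕ) + (j : ℕ) = 2 * n then 1 else 0)
    (hB : B.IsSymm)
    (k₀ : ℕ) (hk₀1 : 1 ≤ k₀) (hk₀n : k₀ ≤ n)
    (hzero : ∀ i j : Fin (2 * n + 1), (i : ℕ) < k₀ → (j : ℕ) < 2 * n + 1 - k₀ → B i j = 0) :
    ¬ (((X : Polynomial k) • A.map C - B.map C).det).Separable := by
  intro hsep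
  set M := (X : k[X]) • A.map C - B.map C
  have hAsymm : A.IsSymm := Matrix.IsSymm.ext fun i j => by rw [hA, hA, add_comm]
  have hMsymm : M.IsSymm := ((hAsymm.map C).smul X).sub (hB.map C)
  have hm : k₀ + (2 * n + 1 - 2 * k₀ + k₀) = 2 * n + 1 := by omega
  let e : Fin k₀ ⊕ Fin (2 * n + 1 - 2 * k₀) ⊕ Fin k₀ ≃ Fin (2 * n + 1) :=
    ((Equiv.sumCongr (Equiv.refl _) finSumFinEquiv).trans finSumFinEquiv).trans (finCongr hm)
  have he_inl (a : Fin k₀) : (e (.inl a) : ℕ) = a := by simp [e]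
  have he_mid (b : Fin (2 * n + 1 - 2 * k₀)) : (e (.inr (.inl b)) : ℕ) = k₀ + b := by simp [e]
  have he_inr (c : Fin k₀) : (e (.inr (.inr c)) : ℕ) = k₀ + (2 * n + 1 - 2 * k₀ + c) := by
    simp [e]
  have hM_eq_zero : ∀ i j : Fin (2 * n + 1), (i : ℕ) < k₀ → (j : ℕ) < 2 * n + 1 - k₀ →
      (i : ℕ) + j ≠ 2 * n → M i j = 0 := by
    intro i j hi hj hij
    simp [M, hA, hij, hzero i j hi hj]
  have hsq := Matrix.det_submatrix_sq_dvd_det_of_isSymm (M.submatrix e e) (hMsymm.submatrix e)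
    (fun a a' => hM_eq_zero _ _ (by rw [he_inl]; omega) (by rw [he_inl]; omega)
      (by rw [he_inl, he_inl]; omega))
    (fun a b => hM_eq_zero _ _ (by rw [he_inl]; omega) (by rw [he_mid]; omega)
      (by rw [he_inl, he_mid]; omega))
  rw [Matrix.det_submatrix_equiv_self, Matrix.submatrix_submatrix] at hsq
  set rows := e ∘ Sum.inl
  set cols := e ∘ Sum.inr ∘ Sum.inr
  have hA_block :
      A.submatrix rows cols = (1 : Matrix (Fin k₀) (Fin k₀) k).submatrix Fin.revPerm id := by
    ext a c
    have := a.isLt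
    have := c.isLt
    simp only [Matrix.submatrix_apply, rows, cols, Function.comp_apply, hA, he_inl, he_inr,
      Matrix.one_apply, Fin.ext_iff, Fin.revPerm_apply, Fin.val_rev, id_eq]
    split_ifs <;> first | rfl | omega
  have hdeg : (M.submatrix rows cols).det.natDegree = k₀ := by
    change ((X : k[X]) • (A.submatrix rows cols).map C -
      (B.submatrix rows cols).map C).det.natDegree = k₀
    rw [hA_block, Matrix.natDegree_det_X_smul_submatrix_one_sub, Fintype.card_fin]
  have hnot_unit : ¬ IsUnit (M.submatrix rows cols).det := fun hu => by
    have := natDegree_eq_zero_of_isUnit hu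
    omega
  exact hnot_unit (hsep.squarefree _ (by rwa [sq] at hsq))

/-- If `B` is a symmetric `(2n+1)×(2n+1)` matrix over a field of characteristic ≠ 2
whose top-left `k₀ × (2n+1-k₀)` block vanishes for some `1 ≤ k₀ ≤ n`, then the
polynomial `det(Ax - B)` (where `A` is the anti-diagonal matrix of 1's) has a
repeated root, i.e. is not separable (its discriminant vanishes). -/
theorem stmt6 (n : ℕ) (k : Type*) [Field k] (hchar : (2 : k) ≠ 0)
    (A B : Matrix (Fin (2 * n + 1)) (Fin (2 * n + 1)) k)
    (hA : ∀ i j, A i j = if (i : ℕ) + (j : ℕ) = 2 * n then 1 else 0)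
    (hB : B.IsSymm)
    (k₀ : ℕ) (hk₀1 : 1 ≤ k₀) (hk₀n : k₀ ≤ n)
    (hzero : ∀ i j : Fin (2 * n + 1), (i : ℕ) < k₀ → (j : ℕ) < 2 * n + 1 - k₀ → B i j = 0) :
    ¬ (((X : Polynomial k) • A.map C - B.map C).det).Separable :=
  stmt6_general n k A B hA hB k₀ hk₀1 hk₀n hzero
end

section
/- For each $n \geq 1$ and each subset $U_0$ of the set $U^- = \{(i,j) : 1 \leq i \leq j,\ i + j < 2n+1\}$, define for $k = 1,\ldots,n$ the quantity $e_k(U_0) = \sum_{(i,j) \in U_0} e_k(i,j)$, where $e_k(i,j)$ is the exponent of $s_k$ (negated) in the weight $w(b_{ij}) = \lambda \cdot s_1^{-2}\cdots s_n^{-2}\cdot (w_1\cdots w_{i-1})(w_1\cdots w_{j-1})$ with $(w_1,\ldots,w_{2n}) = (s_1,\ldots,s_n,s_n,\ldots,s_1)$. Then $\sum_{k=1}^n \max\{0,\ e_k(U_0) + k^2 - 2kn\} \leq |U_0|$, with equality if and only if $U_0 = \varnothing$ or $U_0 = U^-$. -/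
/-- `wIdx n m` is the index `k` such that `w_m = s_k`, where
`(w_1,…,w_{2n}) = (s_1,…,s_n,s_n,…,s_1)`. -/
def wIdx (n m : ℕ) : ℕ := if m ≤ n then m else 2 * n + 1 - m

/-- `eSingle n k i j = e_k(i,j)`, the negated exponent of `s_k` in the weight
`w(b_{ij}) = λ·s₁⁻²⋯s_n⁻²·(w₁⋯w_{i-1})(w₁⋯w_{j-1})`. -/
def eSingle (n k i j : ℕ) : ℤ :=
  2 - (((Finset.Icc 1 (i - 1)).filter (fun m => wIdx n m = k)).card : ℤ)
    - (((Finset.Icc 1 (j - 1)).filter (fun m => wIdx n m = k)).card : ℤ)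

/-- The set `U⁻` of pairs `(i,j)` with `1 ≤ i ≤ j` and `i + j < 2n+1`. -/
def Uminus (n : ℕ) : Finset (ℕ × ℕ) :=
  (Finset.Icc 1 (2 * n) ×ˢ Finset.Icc 1 (2 * n)).filter
    (fun p => p.1 ≤ p.2 ∧ p.1 + p.2 < 2 * n + 1)

/-! On `U⁻` and for `1 ≤ k ≤ n`, `e_k(i,j)` is the indicator of `w_j = s_k` plus a nonnegative
excess, and the excesses over all of `U⁻` add up to `2kn - k²`. So the `k`-th summand is
`max 0 (a_k - d_k)`, where `a_k` counts the points of `U₀` with `w_j = s_k` (these counts add up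
to `|U₀|`) and `d_k ≥ 0` is the total excess of the complement `U⁻ \ U₀`. Equality forces
`d_k = 0` or `a_k = 0` for every `k`, and a single point of the complement has enough positive
excess to empty every fibre of `U₀`. -/

open Finset

section

variable {n : ℕ}

lemma mem_Uminus {p : ℕ × ℕ} :
    p ∈ Uminus n ↔ 1 ≤ p.1 ∧ p.1 ≤ p.2 ∧ p.1 + p.2 ≤ 2 * n := by
  simp only [Uminus, mem_filter, mem_product, mem_Icc]
  omega

lemma wIdx_of_le {m : ℕ} (hm : m ≤ n) : wIdx n m = m := if_pos hm

lemma wIdx_eq_iff {k m : ℕ} (hk : 1 ≤ k) (hkn : k ≤ n) :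
    wIdx n m = k ↔ m = k ∨ m = 2 * n + 1 - k := by
  unfold wIdx; split <;> omega

lemma wIdx_mem_Icc {p : ℕ × ℕ} (hp : p ∈ Uminus n) : wIdx n p.2 ∈ Icc 1 n := by
  rw [mem_Uminus] at hp
  simp only [wIdx, mem_Icc]
  split <;> omega

lemma card_filter_wIdx_eq {k : ℕ} (hk : 1 ≤ k) (hkn : k ≤ n) (M : ℕ) :
    (#{m ∈ Icc 1 M | wIdx n m = k} : ℤ) =
      (if k ≤ M then 1 else 0) + (if 2 * n + 1 - k ≤ M then 1 else 0) := by
  have hne : k ≠ 2 * n + 1 - k := by omega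
  rw [filter_congr fun m _ => wIdx_eq_iff hk hkn, filter_or, filter_eq', filter_eq']
  simp only [mem_Icc]
  split_ifs <;> simp [hne] <;> omega

def eExcess (n k : ℕ) (p : ℕ × ℕ) : ℤ :=
  (if p.1 ≤ k then 1 else 0) + (if p.2 < k then 1 else 0)
    - (if 2 * n + 1 - k ≤ p.2 then 1 else 0)

lemma eSingle_eq_ite_add_eExcess {k : ℕ} (hk : 1 ≤ k) (hkn : k ≤ n) {p : ℕ × ℕ}
    (hp : p ∈ Uminus n) :
    eSingle n k p.1 p.2 = (if wIdx n p.2 = k then 1 else 0) + eExcess n k p := by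
  rw [mem_Uminus] at hp
  have := wIdx_eq_iff (m := p.2) hk hkn
  rw [eSingle, eExcess, card_filter_wIdx_eq hk hkn, card_filter_wIdx_eq hk hkn]
  split_ifs <;> omega

lemma eExcess_nonneg (k : ℕ) {p : ℕ × ℕ} (hp : p ∈ Uminus n) : 0 ≤ eExcess n k p := by
  rw [mem_Uminus] at hp
  unfold eExcess
  split_ifs <;> omega

lemma one_le_eExcess {k : ℕ} {p : ℕ × ℕ} (hk : p.1 ≤ k) (hkn : p.2 + k ≤ 2 * n) :
    1 ≤ eExcess n k p := by
  unfold eExcess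
  split_ifs <;> omega

lemma card_filter_fst_eq {r : ℕ} (hr : 1 ≤ r) (hrn : r ≤ n) :
    #{p ∈ Uminus n | p.1 = r} = 2 * n + 1 - 2 * r := by
  have : {p ∈ Uminus n | p.1 = r} = {r} ×ˢ Icc r (2 * n - r) := by
    ext p
    simp only [mem_filter, mem_Uminus, mem_product, mem_singleton, mem_Icc]
    omega
  rw [this, card_product, card_singleton, Nat.card_Icc]
  omega

lemma card_filter_snd_eq (c : ℕ) : #{p ∈ Uminus n | p.2 = c} = min c (2 * n - c) := by
  have : {p ∈ Uminus n | p.2 = c} = Icc 1 (min c (2 * n - c)) ×ˢ {c} := by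
    ext p
    simp only [mem_filter, mem_Uminus, mem_product, mem_singleton, mem_Icc]
    omega
  rw [this, card_product, card_singleton, Nat.card_Icc]
  omega

lemma eExcess_succ (k : ℕ) {p : ℕ × ℕ} (hp : p ∈ Uminus n) :
    eExcess n (k + 1) p = eExcess n k p + (if p.1 = k + 1 then 1 else 0)
      + (if p.2 = k then 1 else 0) - (if p.2 = 2 * n - k then 1 else 0) := by
  rw [mem_Uminus] at hp
  unfold eExcess
  split_ifs <;> omega

lemma sum_eExcess_Uminus {k : ℕ} (hkn : k ≤ n) :
    ∑ p ∈ Uminus n, eExcess n k p = 2 * k * n - (k : ℤ) ^ 2 := by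
  induction k with
  | zero =>
    trans 0
    · refine sum_eq_zero fun p hp => ?_
      rw [mem_Uminus] at hp
      simp only [eExcess]
      split_ifs <;> omega
    · simp
  | succ k ih =>
    rw [sum_congr rfl fun p hp => eExcess_succ k hp, sum_sub_distrib, sum_add_distrib,
      sum_add_distrib, ih (by omega), sum_boole, sum_boole, sum_boole,
      card_filter_fst_eq (by omega) hkn, card_filter_snd_eq, card_filter_snd_eq,
      show min k (2 * n - k) = k by omega, show min (2 * n - k) (2 * n - (2 * n - k)) = k by omega]
    push_cast [show 2 * (k + 1) ≤ 2 * n + 1 by omega]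
    ring

lemma sum_eSingle_add_sq_sub_eq {k : ℕ} (hk : 1 ≤ k) (hkn : k ≤ n) {U₀ : Finset (ℕ × ℕ)}
    (hU₀ : U₀ ⊆ Uminus n) :
    (∑ p ∈ U₀, eSingle n k p.1 p.2) + (k : ℤ) ^ 2 - 2 * k * n =
      #{p ∈ U₀ | wIdx n p.2 = k} - ∑ p ∈ Uminus n \ U₀, eExcess n k p := by
  rw [sum_congr rfl fun p hp => eSingle_eq_ite_add_eExcess hk hkn (hU₀ hp), sum_add_distrib,
    sum_boole]
  linarith [sum_eExcess_Uminus hkn, sum_sdiff hU₀ (f := eExcess n k)]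

lemma card_eq_sum_card_filter_wIdx {U₀ : Finset (ℕ × ℕ)} (hU₀ : U₀ ⊆ Uminus n) :
    #U₀ = ∑ k ∈ Icc 1 n, #{p ∈ U₀ | wIdx n p.2 = k} :=
  card_eq_sum_card_fiberwise fun _ hp => wIdx_mem_Icc (hU₀ hp)

lemma forall_sum_eExcess_eq_zero_or_card_eq_zero_iff {U₀ : Finset (ℕ × ℕ)}
    (hU₀ : U₀ ⊆ Uminus n) :
    (∀ k ∈ Icc 1 n,
        ∑ p ∈ Uminus n \ U₀, eExcess n k p = 0 ∨ (#{p ∈ U₀ | wIdx n p.2 = k} : ℤ) = 0) ↔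
      U₀ = ∅ ∨ U₀ = Uminus n := by
  refine ⟨fun h => ?_, by rintro (rfl | rfl) k _ <;> simp⟩
  have avoid : ∀ q ∈ Uminus n \ U₀, ∀ k ∈ Icc 1 n, 1 ≤ eExcess n k q →
      ∀ r ∈ U₀, wIdx n r.2 ≠ k := by
    intro q hq k hk hqk r hr hrk
    rcases h k hk with hsum | hcard
    · have := single_le_sum (fun p hp => eExcess_nonneg k (sdiff_subset hp)) hq
      omega
    · rw [Nat.cast_eq_zero, card_eq_zero, filter_eq_empty_iff] at hcard
      exact hcard hr hrk
  rw [or_iff_not_imp_right]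
  intro hne
  -- Positive excess carries a point `(i, j)` of the complement to `(1, i)`, then to `(1, 1)`,
  -- whose excess is positive at every `k`.
  obtain ⟨p, hp⟩ := sdiff_nonempty.2 fun hsub => hne (hU₀.antisymm hsub)
  obtain ⟨hp1, hp12, hpn⟩ := mem_Uminus.1 (sdiff_subset hp)
  have h1p : ((1, p.1) : ℕ × ℕ) ∈ Uminus n \ U₀ :=
    mem_sdiff.2 ⟨mem_Uminus.2 (by omega), fun hr => avoid p hp p.1 (mem_Icc.2 ⟨hp1, by omega⟩)
      (one_le_eExcess le_rfl (by omega)) _ hr (wIdx_of_le (by omega))⟩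
  have h11 : ((1, 1) : ℕ × ℕ) ∈ Uminus n \ U₀ :=
    mem_sdiff.2 ⟨mem_Uminus.2 (by omega), fun hr => avoid _ h1p 1 (mem_Icc.2 ⟨le_rfl, by omega⟩)
      (one_le_eExcess le_rfl (by omega)) _ hr (wIdx_of_le (by omega))⟩
  refine eq_empty_of_forall_notMem fun r hr => ?_
  have hk := mem_Icc.1 (wIdx_mem_Icc (hU₀ hr))
  exact avoid _ h11 _ (wIdx_mem_Icc (hU₀ hr)) (one_le_eExcess hk.1 (by omega)) r hr rfl

end

lemma max_zero_sub_le {a d : ℤ} (ha : 0 ≤ a) (hd : 0 ≤ d) : max 0 (a - d) ≤ a := by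
  omega

lemma max_zero_sub_eq_self_iff {a d : ℤ} (ha : 0 ≤ a) (hd : 0 ≤ d) :
    max 0 (a - d) = a ↔ d = 0 ∨ a = 0 := by
  omega

theorem stmt7_general (n : ℕ) (U₀ : Finset (ℕ × ℕ)) (hU₀ : U₀ ⊆ Uminus n) :
    (∑ k ∈ Finset.Icc 1 n,
        max 0 ((∑ p ∈ U₀, eSingle n k p.1 p.2) + (k : ℤ) ^ 2 - 2 * k * n) ≤ (U₀.card : ℤ)) ∧
    ((∑ k ∈ Finset.Icc 1 n,
        max 0 ((∑ p ∈ U₀, eSingle n k p.1 p.2) + (k : ℤ) ^ 2 - 2 * k * n) = (U₀.card : ℤ)) ↔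
      (U₀ = ∅ ∨ U₀ = Uminus n)) := by
  have ha (k : ℕ) : (0 : ℤ) ≤ #{p ∈ U₀ | wIdx n p.2 = k} := Nat.cast_nonneg _
  have hd (k : ℕ) : 0 ≤ ∑ p ∈ Uminus n \ U₀, eExcess n k p :=
    sum_nonneg fun _ hp => eExcess_nonneg k (sdiff_subset hp)
  have hterm : ∀ k ∈ Icc 1 n, max 0 ((∑ p ∈ U₀, eSingle n k p.1 p.2) + (k : ℤ) ^ 2 - 2 * k * n)
      = max 0 (#{p ∈ U₀ | wIdx n p.2 = k} - ∑ p ∈ Uminus n \ U₀, eExcess n k p) :=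
    fun k hk => by rw [sum_eSingle_add_sq_sub_eq (mem_Icc.1 hk).1 (mem_Icc.1 hk).2 hU₀]
  have hle : ∀ k ∈ Icc 1 n, max 0 (#{p ∈ U₀ | wIdx n p.2 = k} - ∑ p ∈ Uminus n \ U₀,
      eExcess n k p) ≤ (#{p ∈ U₀ | wIdx n p.2 = k} : ℤ) :=
    fun k _ => max_zero_sub_le (ha k) (hd k)
  rw [sum_congr rfl hterm, card_eq_sum_card_filter_wIdx hU₀, Nat.cast_sum,
    sum_eq_sum_iff_of_le hle, ← forall_sum_eExcess_eq_zero_or_card_eq_zero_iff hU₀]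
  exact ⟨sum_le_sum hle, forall₂_congr fun k _ => max_zero_sub_eq_self_iff (ha k) (hd k)⟩

/-- The combinatorial cusp lemma: for `U₀ ⊆ U⁻`,
`∑_{k=1}^n max{0, e_k(U₀) + k² - 2kn} ≤ |U₀|`, with equality iff `U₀ = ∅` or `U₀ = U⁻`. -/
theorem stmt7 (n : ℕ) (hn : 1 ≤ n) (U₀ : Finset (ℕ × ℕ)) (hU₀ : U₀ ⊆ Uminus n) :
    (∑ k ∈ Finset.Icc 1 n,
        max 0 ((∑ p ∈ U₀, eSingle n k p.1 p.2) + (k : ℤ) ^ 2 - 2 * k * n) ≤ (U₀.card : ℤ)) ∧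
    ((∑ k ∈ Finset.Icc 1 n,
        max 0 ((∑ p ∈ U₀, eSingle n k p.1 p.2) + (k : ℤ) ^ 2 - 2 * k * n) = (U₀.card : ℤ)) ↔
      (U₀ = ∅ ∨ U₀ = Uminus n)) :=
  stmt7_general n U₀ hU₀
end

section
/- Let $J$ be a topological abelian group containing a finite-index open subgroup $M$ isomorphic to $\mathbb{Z}_2^n$. Then $\#(J/2J) = 2^n \cdot \#J[2]$. -/
/-! Write `f` for doubling on `J` and `J[2]` for its kernel. Computing `[J : 2M]` through `2J`
and through `M` gives `[J : 2J] · [2J : 2M] = [M : 2M] · [J : M]`. Since `f⁻¹(2M) = M + J[2]`,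
we have `[2J : 2M] = [J : M + J[2]]`, and since `M` has no `2`-torsion,
`[J : M] = [J : M + J[2]] · #J[2]`; cancelling the finite index `[J : M + J[2]]` leaves
`[J : 2J] = [M : 2M] · #J[2]`. Finally `M/2M ≅ (ℤ₂/2ℤ₂)ⁿ` has `2ⁿ` elements. -/

namespace AddSubgroup

theorem index_range_eq_relIndex_map_mul_card_ker {J : Type*} [AddGroup J] (f : J →+ J)
    (M : AddSubgroup J) [M.Normal] [M.FiniteIndex] (hfM : M.map f ≤ M)
    (hker : Disjoint M f.ker) :
    f.range.index = (M.map f).relIndex M * Nat.card f.ker := by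
  have hM_le : M ≤ M ⊔ f.ker := le_sup_left
  have hN : (M ⊔ f.ker).index ≠ 0 := (finiteIndex_of_le hM_le).index_ne_zero
  have hcomap : (M.map f).relIndex f.range = (M ⊔ f.ker).index := by
    rw [← comap_map_eq, index_comap]
  have hsup : M.relIndex (M ⊔ f.ker) = Nat.card f.ker := by
    rw [relIndex_sup_left, ← inf_relIndex_right, disjoint_iff.mp hker, relIndex_bot_left]
  apply Nat.eq_of_mul_eq_mul_right (Nat.pos_of_ne_zero hN)
  calc f.range.index * (M ⊔ f.ker).index = (M.map f).index := by
        rw [← hcomap, mul_comm, relIndex_mul_index (map_le_range f M)]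
    _ = (M.map f).relIndex M * M.index := (relIndex_mul_index hfM).symm
    _ = (M.map f).relIndex M * Nat.card f.ker * (M ⊔ f.ker).index := by
        rw [← relIndex_mul_index hM_le, hsup, mul_assoc]

variable {A : Type*} [AddCommGroup A]

theorem map_nsmulAddMonoidHom_le (M : AddSubgroup A) (k : ℕ) :
    M.map (nsmulAddMonoidHom k) ≤ M := by
  rintro _ ⟨x, hx, rfl⟩
  exact M.nsmul_mem hx k

theorem disjoint_ker_nsmulAddMonoidHom (M : AddSubgroup A) [IsAddTorsionFree M] {k : ℕ}
    (hk : k ≠ 0) : Disjoint M (nsmulAddMonoidHom k).ker := by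
  rw [disjoint_def]
  intro x hxM hx
  have : k • (⟨x, hxM⟩ : M) = 0 := Subtype.ext hx
  exact congrArg Subtype.val ((smul_eq_zero.mp this).resolve_left hk)

theorem index_range_nsmulAddMonoidHom_pi (ι : Type*) [Fintype ι] (k : ℕ) :
    (nsmulAddMonoidHom (α := ι → A) k).range.index =
      (nsmulAddMonoidHom (α := A) k).range.index ^ Fintype.card ι := by
  simp [index_eq_card,
    Nat.card_congr (QuotientAddGroup.addEquivPiModRangeNSMulAddMonoidHom _ k).toEquiv, Nat.card_fun]

end AddSubgroup

theorem AddEquiv.index_range_nsmulAddMonoidHom {A B : Type*} [AddCommGroup A] [AddCommGroup B]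
    (e : A ≃+ B) (k : ℕ) :
    (nsmulAddMonoidHom (α := A) k).range.index = (nsmulAddMonoidHom (α := B) k).range.index := by
  rw [← AddSubgroup.index_map_equiv _ e, e.map_range_nsmulAddMonoidHom]

theorem PadicInt.index_range_nsmulAddMonoidHom_self (p : ℕ) [Fact p.Prime] :
    (nsmulAddMonoidHom (α := ℤ_[p]) p).range.index = p := by
  have hrange : (nsmulAddMonoidHom (α := ℤ_[p]) p).range =
      (toZMod : ℤ_[p] →+* ZMod p).toAddMonoidHom.ker := by
    ext x
    have hker := RingHom.mem_ker (f := (toZMod : ℤ_[p] →+* ZMod p)) (r := x)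
    rw [ker_toZMod, maximalIdeal_eq_span_p, Ideal.mem_span_singleton] at hker
    simp [← hker, Dvd.dvd, eq_comm]
  rw [hrange, AddSubgroup.index_ker, AddMonoidHom.range_eq_top.mpr (ZMod.ringHom_surjective _)]
  simp

theorem stmt11_general (n : ℕ)
    (J : Type*) [AddCommGroup J]
    (M : AddSubgroup J) [M.FiniteIndex]
    (e : M ≃+ (Fin n → ℤ_[2])) :
    Nat.card (J ⧸ (2 • AddMonoidHom.id J).range) = 2 ^ n * Nat.card {x : J // x + x = 0} := by
  have : IsAddTorsionFree M := e.injective.isAddTorsionFree (e : M →+ (Fin n → ℤ_[2]))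
  have hM : (M.map (nsmulAddMonoidHom 2)).relIndex M = 2 ^ n := by
    rw [AddSubgroup.relIndex, AddSubgroup.addSubgroupOf_map_nsmulAddMonoidHom_eq_range,
      e.index_range_nsmulAddMonoidHom, AddSubgroup.index_range_nsmulAddMonoidHom_pi,
      PadicInt.index_range_nsmulAddMonoidHom_self, Fintype.card_fin]
  have hker : Nat.card (nsmulAddMonoidHom (α := J) 2).ker = Nat.card {x : J // x + x = 0} :=
    Nat.card_congr (Equiv.subtypeEquivRight fun x ↦ by simp [two_nsmul])
  rw [← hM, ← hker]
  exact AddSubgroup.index_range_eq_relIndex_map_mul_card_ker _ M (M.map_nsmulAddMonoidHom_le 2)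
    (M.disjoint_ker_nsmulAddMonoidHom two_ne_zero)

/-- If a topological abelian group `J` contains an open finite-index subgroup `M`
topologically isomorphic to `ℤ₂ⁿ`, then `#(J/2J) = 2ⁿ · #J[2]`. -/
theorem stmt11 (n : ℕ)
    (J : Type*) [AddCommGroup J] [TopologicalSpace J] [IsTopologicalAddGroup J]
    (M : AddSubgroup J) (hopen : IsOpen (M : Set J)) [M.FiniteIndex]
    (e : M ≃+ (Fin n → ℤ_[2])) (he : Continuous e) (he' : Continuous e.symm) :
    Nat.card (J ⧸ (2 • AddMonoidHom.id J).range) = 2 ^ n * Nat.card {x : J // x + x = 0} :=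
  stmt11_general n J M e
end

section
/- Let $k$ be a separably closed field with $\mathrm{char}(k) \neq 2$, let $W$ be a non-degenerate split quadratic space over $k$ of dimension $2n+1$, and let $f(x)$ be a monic separable polynomial of degree $2n+1$. If $T, T': W \to W$ are both self-adjoint with characteristic polynomial $f(x)$, then there exists $g \in \mathrm{SO}(W)(k)$ with $T' = gTg^{-1}$. Moreover, the stabilizer of $T$ in $\mathrm{SO}(W)(k)$ is an elementary abelian $2$-group of order $2^{2n}$. -/
/-!
A self-adjoint `T` whose characteristic polynomial is separable has `2n + 1` distinct eigenvalues
over the separably closed field `k`, and eigenvectors for distinct eigenvalues are `B`-orthogonal.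
As every element of `k` is a square, `T` therefore has a `B`-orthonormal eigenbasis. The linear map
matching orthonormal eigenbases of `T` and `T'` is an isometry conjugating `T` to `T'`; its
determinant is `±1`, and since `-1` has determinant `-1` in odd dimension, a sign makes it special.
An isometry commuting with `T` preserves every eigenline and acts on it by a sign, so the stabilizer
is the group of sign vectors with product `1`, of order `2 ^ (2n + 1 - 1)`.
-/

open Polynomial Module

theorem card_fun_prod_eq_one {G ι : Type*} [CommGroup G] [Finite G] [Fintype ι] [Nonempty ι] :
    Nat.card {ε : ι → G // ∏ i, ε i = 1} = Nat.card G ^ (Fintype.card ι - 1) := by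
  classical
  let φ : (ι → G) →* G := ∏ i, Pi.evalMonoidHom (fun _ => G) i
  have hφ : ∀ ε, φ ε = ∏ i, ε i := fun ε => by simp [φ, MonoidHom.finsetProd_apply]
  have hsurj : Function.Surjective φ := fun x =>
    ⟨Pi.mulSingle (Classical.arbitrary ι) x, by simp [hφ]⟩
  have hker : Nat.card {ε : ι → G // ∏ i, ε i = 1} = Nat.card φ.ker :=
    Nat.card_congr (Equiv.subtypeEquivRight fun ε => by rw [MonoidHom.mem_ker, hφ])
  have h := φ.ker.card_mul_index
  rw [Subgroup.index_ker, MonoidHom.range_eq_top.2 hsurj, Subgroup.card_top, Nat.card_fun,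
    Nat.card_eq_fintype_card (α := ι), ← hker,
    ← Nat.sub_add_cancel (Fintype.card_pos (α := ι)), pow_succ] at h
  exact Nat.eq_of_mul_eq_mul_right Nat.card_pos h

section

variable {k W ι : Type*} [Field k] [AddCommGroup W] [Module k W]

theorem LinearMap.exists_basis_rootSet_eigenvectors [FiniteDimensional k W] {T : W →ₗ[k] W}
    {f : k[X]} (hcp : T.charpoly = f) (hsep : f.Separable) (hsplit : f.Splits) :
    ∃ b : Basis (f.rootSet k) k W, ∀ μ, T (b μ) = (μ : k) • b μ := by
  have hev : ∀ μ : f.rootSet k, ∃ v, Module.End.HasEigenvector T μ v := fun μ => by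
    refine Module.End.HasEigenvalue.exists_hasEigenvector
      ((Module.End.hasEigenvalue_iff_isRoot_charpoly T μ).2 ?_)
    rw [hcp]
    simpa using (mem_rootSet.1 μ.2).2
  choose v hv using hev
  have hcard : Fintype.card (f.rootSet k) = finrank k W := by
    rw [card_rootSet_eq_natDegree hsep (by simpa using hsplit), ← hcp, charpoly_natDegree]
  refine ⟨basisOfLinearIndependentOfCardEqFinrank' v
    (Module.End.eigenvectors_linearIndependent T _ v hv) hcard, fun μ => ?_⟩
  simpa using (hv μ).apply_eq_smul

theorem LinearMap.IsAdjointPair.apply_eq_zero_of_eigenvalue_ne {B : LinearMap.BilinForm k W}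
    {T : W →ₗ[k] W} (hT : IsAdjointPair B B T T)
    {x y : W} {a c : k} (hx : T x = a • x) (hy : T y = c • y) (hac : a ≠ c) : B x y = 0 := by
  have h : a * B x y = c * B x y := by
    calc a * B x y = B (T x) y := by rw [hx, map_smul, smul_apply, smul_eq_mul]
      _ = B x (T y) := hT x y
      _ = c * B x y := by rw [hy, map_smul, smul_eq_mul]
  by_contra hxy
  exact hac (mul_right_cancel₀ hxy h)

namespace Module.Basis

variable {T T' : W →ₗ[k] W} {d : ι → k}

theorem semiconj_equiv_of_eigenvectors (b b' : Basis ι k W) (hbT : ∀ i, T (b i) = d i • b i)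
    (hbT' : ∀ i, T' (b' i) = d i • b' i) :
    Function.Semiconj (b.equiv b' (Equiv.refl ι)) T T' := by
  have : (b.equiv b' (Equiv.refl ι) : W →ₗ[k] W) ∘ₗ T = T' ∘ₗ b.equiv b' (Equiv.refl ι) :=
    b.ext fun i => by simp [hbT, hbT']
  exact fun v => LinearMap.congr_fun this v

noncomputable def diagonalEquiv (b : Basis ι k W) (ε : ι → kˣ) : W ≃ₗ[k] W :=
  b.equiv (b.unitsSMul ε) (Equiv.refl ι)

variable (b : Basis ι k W) (ε : ι → kˣ)

@[simp]
theorem diagonalEquiv_apply_self (i : ι) : b.diagonalEquiv ε (b i) = (ε i : k) • b i := by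
  rw [diagonalEquiv, equiv_apply, Equiv.refl_apply, unitsSMul_apply, Units.smul_def]

theorem det_diagonalEquiv [Fintype ι] [DecidableEq ι] :
    LinearMap.det (b.diagonalEquiv ε : W →ₗ[k] W) = ∏ i, (ε i : k) := by
  have h := b.det_comp (b.diagonalEquiv ε) b
  rw [b.det_self, mul_one] at h
  rw [← h, ← b.det_unitsSMul_self ε]
  congr 1
  ext i
  simp [unitsSMul_apply, Units.smul_def]

theorem semiconj_diagonalEquiv (hbT : ∀ i, T (b i) = d i • b i) :
    Function.Semiconj (b.diagonalEquiv ε) T T :=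
  b.semiconj_equiv_of_eigenvectors _ hbT fun i => by
    rw [unitsSMul_apply, Units.smul_def, map_smul, hbT, smul_comm]

end Module.Basis

theorem card_rootsOfUnity_two (hchar : (2 : k) ≠ 0) : Nat.card (rootsOfUnity 2 k) = 2 :=
  (IsPrimitiveRoot.neg_one (ringChar k) fun h => hchar <| by
    simpa [h] using ringChar.Nat.cast_ringChar (R := k)).card_rootsOfUnity

namespace LinearMap.BilinForm

variable {B : LinearMap.BilinForm k W}

def IsOrthonormal (B : LinearMap.BilinForm k W) (v : ι → W) : Prop :=
  B.iIsOrtho v ∧ ∀ i, B (v i) (v i) = 1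

theorem IsOrthonormal.apply_eq_apply {v v' : ι → W} (hv : B.IsOrthonormal v)
    (hv' : B.IsOrthonormal v') (i j : ι) : B (v i) (v j) = B (v' i) (v' j) := by
  rcases eq_or_ne i j with rfl | hij
  · rw [hv.2, hv'.2]
  · rw [iIsOrtho_def.1 hv.1 i j hij, iIsOrtho_def.1 hv'.1 i j hij]

theorem IsOrthonormal.smul {v : ι → W} (hv : B.IsOrthonormal v) {ε : ι → k}
    (hε : ∀ i, ε i ^ 2 = 1) : B.IsOrthonormal fun i => ε i • v i := by
  refine ⟨iIsOrtho_def.2 fun i j hij => ?_, fun i => ?_⟩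
  · simp [iIsOrtho_def.1 hv.1 i j hij]
  · simp only [map_smul, smul_apply, smul_eq_mul, hv.2]
    rw [mul_one, ← sq, hε]

theorem IsOrthonormal.repr_apply [Fintype ι] {b : Basis ι k W} (hb : B.IsOrthonormal b) (v : W)
    (i : ι) : b.repr v i = B v (b i) := by
  conv_rhs => rw [← b.sum_repr v]
  simp only [map_sum, map_smul, LinearMap.sum_apply, LinearMap.smul_apply, smul_eq_mul]
  rw [Finset.sum_eq_single i (fun j _ hji => by rw [iIsOrtho_def.1 hb.1 j i hji, mul_zero])
    (by simp), hb.2, mul_one]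

theorem isometry_of_isOrthonormal {b : Basis ι k W} {v : ι → W} (hb : B.IsOrthonormal b)
    (hv : B.IsOrthonormal v) {g : W →ₗ[k] W} (hg : ∀ i, g (b i) = v i) (x y : W) :
    B (g x) (g y) = B x y := by
  have : B.comp g g = B := ext_basis b fun i j => by
    rw [comp_apply, hg, hg, hv.apply_eq_apply hb]
  rw [← comp_apply, this]

theorem det_sq_eq_one_of_isometry [FiniteDimensional k W] (hB : B.Nondegenerate)
    {g : W →ₗ[k] W} (hg : ∀ x y, B (g x) (g y) = B x y) : LinearMap.det g ^ 2 = 1 := by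
  classical
  let b := Module.finBasis k W
  have hcomp : B.comp g g = B := ext fun x y => hg x y
  have hdet := congrArg Matrix.det (toMatrix_comp b b B g g)
  rw [hcomp, Matrix.det_mul, Matrix.det_mul, Matrix.det_transpose, LinearMap.det_toMatrix] at hdet
  have hB' := (nondegenerate_iff_det_ne_zero b).1 hB
  apply mul_right_cancel₀ hB'
  linear_combination -hdet

theorem exists_isOrthonormal_unitsSMul [IsSepClosed k] (hchar : (2 : k) ≠ 0)
    (hB : B.Nondegenerate) {b : Basis ι k W} (hb : B.iIsOrtho b) :
    ∃ u : ι → kˣ, B.IsOrthonormal (b.unitsSMul u) := by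
  have : NeZero (2 : k) := ⟨hchar⟩
  choose s hs using fun i => IsSepClosed.exists_pow_nat_eq (B (b i) (b i)) 2
  have hs0 : ∀ i, s i ≠ 0 := fun i h => by
    apply hb.not_isOrtho_basis_self_of_nondegenerate hB i
    rw [← hs, h, zero_pow two_ne_zero]
  refine ⟨fun i => (Units.mk0 (s i) (hs0 i))⁻¹, iIsOrtho_def.2 fun i j hij => ?_, fun i => ?_⟩
  · simp [Basis.unitsSMul_apply, Units.smul_def, iIsOrtho_def.1 hb i j hij]
  · simp only [Basis.unitsSMul_apply, Units.smul_def, map_smul, LinearMap.smul_apply,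
      smul_eq_mul, ← hs, Units.val_inv_eq_inv_val, Units.val_mk0]
    field_simp [hs0 i]

theorem exists_isOrthonormal_basis_rootSet_eigenvectors [IsSepClosed k] [FiniteDimensional k W]
    (hchar : (2 : k) ≠ 0) (hB : B.Nondegenerate) {T : W →ₗ[k] W} (hT : IsAdjointPair B B T T)
    {f : k[X]} (hcp : T.charpoly = f) (hsep : f.Separable) :
    ∃ b : Basis (f.rootSet k) k W, B.IsOrthonormal b ∧ ∀ μ, T (b μ) = (μ : k) • b μ := by
  obtain ⟨b, hbT⟩ :=
    T.exists_basis_rootSet_eigenvectors hcp hsep (IsSepClosed.splits_of_separable f hsep)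
  have hb : B.iIsOrtho b := iIsOrtho_def.2 fun μ ν hμν =>
    hT.apply_eq_zero_of_eigenvalue_ne (hbT μ) (hbT ν) (Subtype.coe_injective.ne hμν)
  obtain ⟨u, hu⟩ := exists_isOrthonormal_unitsSMul hchar hB hb
  refine ⟨b.unitsSMul u, hu, fun μ => ?_⟩
  rw [Basis.unitsSMul_apply, Units.smul_def, map_smul, hbT, smul_comm]

theorem exists_isometry_det_eq_one_semiconj [FiniteDimensional k W] (hodd : Odd (finrank k W))
    (hB : B.Nondegenerate) {b b' : Basis ι k W} (hb : B.IsOrthonormal b)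
    (hb' : B.IsOrthonormal b') {T T' : W →ₗ[k] W} {d : ι → k} (hbT : ∀ i, T (b i) = d i • b i)
    (hbT' : ∀ i, T' (b' i) = d i • b' i) :
    ∃ g : W ≃ₗ[k] W, (∀ x y, B (g x) (g y) = B x y) ∧ LinearMap.det (g : W →ₗ[k] W) = 1 ∧
      Function.Semiconj g T T' := by
  set e := b.equiv b' (Equiv.refl ι)
  have he : ∀ x y, B (e x) (e y) = B x y :=
    isometry_of_isOrthonormal hb hb' fun i => b.equiv_apply i b' (Equiv.refl ι)
  have hdet : LinearMap.det (e : W →ₗ[k] W) ^ 2 = 1 := det_sq_eq_one_of_isometry hB he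
  -- in odd dimension, rescaling by `σ = det e = ±1` multiplies the determinant by `σ`
  set σ : kˣ := Units.mk0 (LinearMap.det (e : W →ₗ[k] W))
    (right_ne_zero_of_mul_eq_one (a := LinearMap.det (e : W →ₗ[k] W)) (by rw [← sq, hdet]))
  have hσ : (σ : k) ^ 2 = 1 := hdet
  have hg : ((e.trans (LinearEquiv.smulOfUnit σ) : W ≃ₗ[k] W) : W →ₗ[k] W) =
      (σ : k) • (e : W →ₗ[k] W) := by
    ext; rfl
  have hgx : ∀ x, e.trans (LinearEquiv.smulOfUnit σ) x = (σ : k) • e x :=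
    fun x => LinearMap.congr_fun hg x
  refine ⟨e.trans (LinearEquiv.smulOfUnit σ), fun x y => ?_, ?_, fun x => ?_⟩
  · rw [hgx, hgx, map_smul, map_smul, LinearMap.smul_apply, he, smul_eq_mul, smul_eq_mul,
      ← mul_assoc, ← sq, hσ, one_mul]
  · obtain ⟨m, hm⟩ := hodd
    rw [hg, LinearMap.det_smul, hm, show LinearMap.det (e : W →ₗ[k] W) = σ from rfl, ← pow_succ,
      show 2 * m + 1 + 1 = 2 * (m + 1) by ring, pow_mul, hσ, one_pow]
  · rw [hgx, hgx, b.semiconj_equiv_of_eigenvectors b' hbT hbT' x, map_smul]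

section Eigenbasis

variable [Fintype ι] {b : Basis ι k W} {T : W →ₗ[k] W} {d : ι → k}

theorem IsOrthonormal.eq_smul_of_apply_eq_smul (hb : B.IsOrthonormal b)
    (hT : IsAdjointPair B B T T) (hd : Function.Injective d) (hbT : ∀ i, T (b i) = d i • b i)
    {v : W} {i : ι} (hv : T v = d i • v) : v = B v (b i) • b i := by
  conv_lhs => rw [← b.sum_repr v]
  refine (Finset.sum_eq_single i (fun j _ hji => ?_) (by simp)).trans (by rw [hb.repr_apply])
  rw [hb.repr_apply, hT.apply_eq_zero_of_eigenvalue_ne hv (hbT j) (hd.ne hji.symm), zero_smul]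

theorem IsOrthonormal.exists_apply_eq_smul_of_isometry_of_commute (hb : B.IsOrthonormal b)
    (hT : IsAdjointPair B B T T) (hd : Function.Injective d) (hbT : ∀ i, T (b i) = d i • b i)
    {g : W →ₗ[k] W} (hg : ∀ x y, B (g x) (g y) = B x y) (hgT : ∀ v, g (T v) = T (g v))
    (i : ι) : ∃ c : k, c ^ 2 = 1 ∧ g (b i) = c • b i := by
  set c := B (g (b i)) (b i)
  have h : g (b i) = c • b i :=
    hb.eq_smul_of_apply_eq_smul hT hd hbT (by rw [← hgT, hbT, map_smul])
  refine ⟨c, ?_, h⟩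
  have := hg (b i) (b i)
  rw [h, map_smul, map_smul, LinearMap.smul_apply, hb.2, smul_eq_mul, smul_eq_mul, mul_one] at this
  rw [sq, this]

theorem IsOrthonormal.apply_apply_eq_self_of_isometry_of_commute (hb : B.IsOrthonormal b)
    (hT : IsAdjointPair B B T T) (hd : Function.Injective d) (hbT : ∀ i, T (b i) = d i • b i)
    {g : W →ₗ[k] W} (hg : ∀ x y, B (g x) (g y) = B x y) (hgT : ∀ v, g (T v) = T (g v))
    (v : W) : g (g v) = v := by
  have : g ∘ₗ g = LinearMap.id := b.ext fun i => by
    obtain ⟨c, hc, h⟩ := hb.exists_apply_eq_smul_of_isometry_of_commute hT hd hbT hg hgT i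
    rw [LinearMap.comp_apply, h, map_smul, h, smul_smul, ← sq, hc, one_smul, LinearMap.id_apply]
  exact LinearMap.congr_fun this v

theorem IsOrthonormal.exists_diagonalEquiv_eq (hb : B.IsOrthonormal b)
    (hT : IsAdjointPair B B T T) (hd : Function.Injective d) (hbT : ∀ i, T (b i) = d i • b i)
    {g : W ≃ₗ[k] W} (hg : ∀ x y, B (g x) (g y) = B x y) (hgT : ∀ v, g (T v) = T (g v)) :
    ∃ ε : ι → rootsOfUnity 2 k, b.diagonalEquiv (fun i => ε i) = g := by
  choose c hc h using
    hb.exists_apply_eq_smul_of_isometry_of_commute hT hd hbT (g := g) hg hgT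
  refine ⟨fun i => ⟨Units.mkOfMulEqOne _ _ (by rw [← sq, hc i]), ?_⟩, b.ext' fun i => ?_⟩
  · rw [mem_rootsOfUnity]
    ext
    simp [hc i]
  · rw [Basis.diagonalEquiv_apply_self]
    exact (h i).symm

theorem IsOrthonormal.card_stabilizer [Nonempty ι] (hchar : (2 : k) ≠ 0)
    (hb : B.IsOrthonormal b) (hT : IsAdjointPair B B T T) (hd : Function.Injective d)
    (hbT : ∀ i, T (b i) = d i • b i) :
    Nat.card {g : W ≃ₗ[k] W // (∀ v w, B (g v) (g w) = B v w) ∧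
        LinearMap.det (g : W →ₗ[k] W) = 1 ∧ ∀ v, g (T v) = T (g v)} =
      2 ^ (Fintype.card ι - 1) := by
  classical
  have hsq : ∀ (ε : ι → rootsOfUnity 2 k) i, ((ε i : kˣ) : k) ^ 2 = 1 := fun ε i => by
    rw [← Units.val_pow_eq_pow_val, (mem_rootsOfUnity 2 _).1 (ε i).2, Units.val_one]
  have hdet : ∀ ε : ι → rootsOfUnity 2 k,
      LinearMap.det (b.diagonalEquiv (fun i => ε i) : W →ₗ[k] W) =
        ((∏ i, ε i : rootsOfUnity 2 k) : kˣ) := fun ε => by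
    rw [b.det_diagonalEquiv]
    push_cast
    rfl
  -- a sign vector `ε` is encoded in `rootsOfUnity 2 k`, so that `card_fun_prod_eq_one` applies
  let Ψ : {ε : ι → rootsOfUnity 2 k // ∏ i, ε i = 1} → {g : W ≃ₗ[k] W //
      (∀ v w, B (g v) (g w) = B v w) ∧ LinearMap.det (g : W →ₗ[k] W) = 1 ∧
        ∀ v, g (T v) = T (g v)} := fun ε =>
    ⟨b.diagonalEquiv (fun i => ε.1 i),
      isometry_of_isOrthonormal hb (hb.smul (hsq ε.1)) (b.diagonalEquiv_apply_self _),
      by rw [hdet, ε.2]; rfl, b.semiconj_diagonalEquiv _ hbT⟩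
  rw [← card_rootsOfUnity_two hchar, ← card_fun_prod_eq_one]
  refine (Nat.card_eq_of_bijective Ψ ⟨fun ε ε' h => ?_, fun g => ?_⟩).symm
  · ext i : 4
    have := congrArg (fun g => g.1 (b i)) h
    simp only [Ψ, Basis.diagonalEquiv_apply_self] at this
    exact smul_left_injective k (b.ne_zero i) this
  · obtain ⟨ε, hε⟩ := hb.exists_diagonalEquiv_eq hT hd hbT g.2.1 g.2.2.2
    refine ⟨⟨ε, ?_⟩, Subtype.ext hε⟩
    ext
    rw [← hdet, hε, g.2.2.1]
    rfl

end Eigenbasis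

end LinearMap.BilinForm

end

theorem stmt13_general (n : ℕ) (k : Type*) [Field k] [IsSepClosed k] (hchar : (2 : k) ≠ 0)
    (W : Type*) [AddCommGroup W] [Module k W] [FiniteDimensional k W]
    (hdim : Module.finrank k W = 2 * n + 1)
    (B : LinearMap.BilinForm k W) (hnd : B.Nondegenerate)
    (f : Polynomial k) (hsep : f.Separable)
    (T T' : W →ₗ[k] W)
    (hT : ∀ v w, B (T v) w = B v (T w)) (hT' : ∀ v w, B (T' v) w = B v (T' w))
    (hcp : T.charpoly = f) (hcp' : T'.charpoly = f) :
    (∃ g : W ≃ₗ[k] W, (∀ v w, B (g v) (g w) = B v w) ∧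
        LinearMap.det (g : W →ₗ[k] W) = 1 ∧ ∀ v, T' v = g (T (g.symm v))) ∧
    (Nat.card {g : W ≃ₗ[k] W // (∀ v w, B (g v) (g w) = B v w) ∧
        LinearMap.det (g : W →ₗ[k] W) = 1 ∧ ∀ v, g (T v) = T (g v)} = 2 ^ (2 * n)) ∧
    (∀ g : W ≃ₗ[k] W, (∀ v w, B (g v) (g w) = B v w) →
        LinearMap.det (g : W →ₗ[k] W) = 1 → (∀ v, g (T v) = T (g v)) →
        ∀ v, g (g v) = v) := by
  obtain ⟨b, hb, hbT⟩ :=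
    LinearMap.BilinForm.exists_isOrthonormal_basis_rootSet_eigenvectors hchar hnd hT hcp hsep
  obtain ⟨b', hb', hbT'⟩ :=
    LinearMap.BilinForm.exists_isOrthonormal_basis_rootSet_eigenvectors hchar hnd hT' hcp' hsep
  have hcard : Fintype.card (f.rootSet k) = 2 * n + 1 := by
    rw [← hdim, ← finrank_eq_card_basis b]
  have : Nonempty (f.rootSet k) := Fintype.card_pos_iff.1 (by omega)
  refine ⟨?_, ?_, fun g hg _ hgT => hb.apply_apply_eq_self_of_isometry_of_commute hT
    Subtype.coe_injective hbT (g := g) hg hgT⟩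
  · obtain ⟨g, hg, hdet, hgT⟩ :=
      LinearMap.BilinForm.exists_isometry_det_eq_one_semiconj (hdim ▸ odd_two_mul_add_one n) hnd
        hb hb' hbT hbT'
    exact ⟨g, hg, hdet, fun v => by rw [hgT, LinearEquiv.apply_symm_apply]⟩
  · rw [hb.card_stabilizer hchar hT Subtype.coe_injective hbT, hcard, Nat.add_sub_cancel]

/-- Over a separably closed field `k` with `char k ≠ 2`, the group `SO(W)(k)` of a
split non-degenerate quadratic space `W` of dimension `2n+1` acts transitively on
self-adjoint operators with a fixed separable characteristic polynomial, and the
stabilizer of such an operator is an elementary abelian 2-group of order `2^{2n}`. -/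
theorem stmt13 (n : ℕ) (k : Type*) [Field k] [IsSepClosed k] (hchar : (2 : k) ≠ 0)
    (W : Type*) [AddCommGroup W] [Module k W] [FiniteDimensional k W]
    (hdim : Module.finrank k W = 2 * n + 1)
    (B : LinearMap.BilinForm k W) (hsymm : B.IsSymm) (hnd : B.Nondegenerate)
    (hsplit : ∃ X : Submodule k W, Module.finrank k X = n ∧ ∀ x ∈ X, ∀ y ∈ X, B x y = 0)
    (f : Polynomial k) (hmonic : f.Monic) (hsep : f.Separable)
    (hfdeg : f.natDegree = 2 * n + 1)
    (T T' : W →ₗ[k] W)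
    (hT : ∀ v w, B (T v) w = B v (T w)) (hT' : ∀ v w, B (T' v) w = B v (T' w))
    (hcp : T.charpoly = f) (hcp' : T'.charpoly = f) :
    (∃ g : W ≃ₗ[k] W, (∀ v w, B (g v) (g w) = B v w) ∧
        LinearMap.det (g : W →ₗ[k] W) = 1 ∧ ∀ v, T' v = g (T (g.symm v))) ∧
    (Nat.card {g : W ≃ₗ[k] W // (∀ v w, B (g v) (g w) = B v w) ∧
        LinearMap.det (g : W →ₗ[k] W) = 1 ∧ ∀ v, g (T v) = T (g v)} = 2 ^ (2 * n)) ∧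
    (∀ g : W ≃ₗ[k] W, (∀ v w, B (g v) (g w) = B v w) →
        LinearMap.det (g : W →ₗ[k] W) = 1 → (∀ v, g (T v) = T (g v)) →
        ∀ v, g (g v) = v) :=
  stmt13_general n k hchar W hdim B hnd f hsep T T' hT hT' hcp hcp'
end

section
/- Let $F(z) = a_0 z + (a_2/3) z^3 + (a_4/5) z^5 + \cdots$ be a power series with coefficients $a_{2i} \in \mathbb{Z}_3$ converging on $3\mathbb{Z}_3$, and suppose that $a_0$ or $a_2$ is a unit in $\mathbb{Z}_3$. Then $F$ has at most three zeroes in the disc $3\mathbb{Z}_3$. -/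
/-!
Write `F(z) = Σ aᵢ z^(2i+1)` with `aᵢ = cᵢ/(2i+1)`, so that `‖aᵢ‖ ≤ 2i+1`. Since `F` is odd, a zero
`z ≠ 0` of `F` gives the zero `t = z²`, with `‖t‖ ≤ 1/9`, of the series `G(t) = Σ aᵢ tⁱ`.
If `c₀` is a unit, the constant term of `G` strictly dominates all its other terms on that disc,
so `G` has no zero there. If `c₁` is a unit then `‖a₁‖ = 3`, and for two distinct zeros `s ≠ t`
of `G` the divided difference `Σ aᵢ (sⁱ - tⁱ)/(s - t)` vanishes although its term `a₁` strictly
dominates. Either way all nonzero zeros of `F` have the same square, so `F` has at most the three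
zeros `0, ±z`.
-/

open Finset IsUltrametricDist

lemma IsUltrametricDist.norm_le_of_hasSum_zero {ι E : Type*} [NormedAddCommGroup E]
    [IsUltrametricDist E] {f : ι → E} (hf : HasSum f 0) {C : ℝ} (hC : 0 ≤ C) (k : ι)
    (h : ∀ i ≠ k, ‖f i‖ ≤ C) : ‖f k‖ ≤ C := by
  classical
  have hrest := (hf.update k 0).tsum_eq
  rw [zero_sub, add_zero] at hrest
  rw [← norm_neg, ← hrest]
  refine norm_tsum_le_of_forall_le_of_nonneg hC fun i => ?_
  rcases eq_or_ne i k with rfl | hi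
  · simpa using hC
  · simpa [Function.update_of_ne hi] using h i hi

lemma IsUltrametricDist.norm_geom_sum₂_le {K : Type*} [NormedField K] [IsUltrametricDist K]
    {x y : K} {r : ℝ} (hx : ‖x‖ ≤ r) (hy : ‖y‖ ≤ r) (n : ℕ) :
    ‖∑ j ∈ range n, x ^ j * y ^ (n - 1 - j)‖ ≤ r ^ (n - 1) := by
  have hr : 0 ≤ r := (norm_nonneg x).trans hx
  refine norm_sum_le_of_forall_le_of_nonneg (pow_nonneg hr _) fun j hj => ?_
  have hjn : j + (n - 1 - j) = n - 1 := by have := mem_range.mp hj; omega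
  calc ‖x ^ j * y ^ (n - 1 - j)‖ = ‖x‖ ^ j * ‖y‖ ^ (n - 1 - j) := by
        rw [norm_mul, norm_pow, norm_pow]
    _ ≤ r ^ j * r ^ (n - 1 - j) := by gcongr
    _ = r ^ (n - 1) := by rw [← pow_add, hjn]

lemma hasSum_mul_geom_sum₂_of_hasSum_zero {K : Type*} [Field K] [TopologicalSpace K]
    [IsTopologicalRing K] {a : ℕ → K} {x y : K} (hxy : x ≠ y)
    (hx : HasSum (fun n => a n * x ^ n) 0) (hy : HasSum (fun n => a n * y ^ n) 0) :
    HasSum (fun n => a n * ∑ j ∈ range n, x ^ j * y ^ (n - 1 - j)) 0 := by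
  have hdiff := (hx.sub hy).div_const (x - y)
  rw [sub_zero, zero_div] at hdiff
  convert hdiff using 2 with n
  rw [← mul_sub, ← Commute.geom_sum₂_mul (Commute.all x y), mul_div_assoc,
    mul_div_cancel_right₀ _ (sub_ne_zero.mpr hxy)]

lemma hasSum_mul_sq_pow_of_hasSum_mul_odd_pow {K : Type*} [Field K] [TopologicalSpace K]
    [IsTopologicalRing K] {a : ℕ → K} {z : K} (hz : z ≠ 0)
    (h : HasSum (fun i => a i * z ^ (2 * i + 1)) 0) :
    HasSum (fun i => a i * (z ^ 2) ^ i) 0 := by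
  have hdiv := h.mul_left z⁻¹
  rw [mul_zero] at hdiv
  have hterm : (fun i => a i * (z ^ 2) ^ i) = fun i => z⁻¹ * (a i * z ^ (2 * i + 1)) := by
    funext i
    rw [← pow_mul, pow_succ' z (2 * i), mul_left_comm, inv_mul_cancel_left₀ hz]
  rwa [hterm]

lemma Padic.norm_inv_natCast_le {p : ℕ} [Fact p.Prime] {n : ℕ} (hn : n ≠ 0) :
    ‖(n : ℚ_[p])⁻¹‖ ≤ n := by
  rw [norm_inv, Padic.norm_eq_zpow_neg_valuation (by exact_mod_cast hn), Padic.valuation_natCast,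
    ← zpow_neg, neg_neg, zpow_natCast]
  exact_mod_cast Nat.le_of_dvd (Nat.pos_of_ne_zero hn) pow_padicValNat_dvd

lemma PadicInt.norm_coe_div_natCast_le {p : ℕ} [Fact p.Prime] (x : ℤ_[p]) {n : ℕ} (hn : n ≠ 0) :
    ‖(x : ℚ_[p]) / n‖ ≤ n := by
  rw [div_eq_mul_inv, norm_mul]
  calc ‖(x : ℚ_[p])‖ * ‖(n : ℚ_[p])⁻¹‖ ≤ 1 * n :=
        mul_le_mul x.norm_le_one (Padic.norm_inv_natCast_le hn) (norm_nonneg _) zero_le_one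
    _ = n := one_mul _

lemma Finset.card_le_three_of_sq_eq {R : Type*} [CommRing R] [NoZeroDivisors R] (s : Finset R)
    (h : ∀ x ∈ s, ∀ y ∈ s, x ≠ 0 → y ≠ 0 → x ^ 2 = y ^ 2) : s.card ≤ 3 := by
  classical
  by_cases hu : ∃ u ∈ s, u ≠ 0
  · obtain ⟨u, hus, hu0⟩ := hu
    have hsub : s ⊆ {0, u, -u} := fun x hx => by
      by_cases hx0 : x = 0
      · simp [hx0]
      · rcases sq_eq_sq_iff_eq_or_eq_neg.mp (h x hx u hus hx0 hu0) with rfl | rfl <;> simp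
    exact (card_le_card hsub).trans card_le_three
  · push Not at hu
    have hsub : s ⊆ {0} := fun x hx => mem_singleton.mpr (hu x hx)
    exact (card_le_card hsub).trans (by simp)

section EvenSeries

variable {K : Type*} [NormedField K] [IsUltrametricDist K] {a : ℕ → K}

lemma not_hasSum_zero_of_norm_coeff_zero_eq_one (ha : ∀ i, ‖a i‖ ≤ 2 * i + 1)
    (h0 : ‖a 0‖ = 1) {t : K} (ht : ‖t‖ ≤ 9⁻¹) : ¬ HasSum (fun i => a i * t ^ i) 0 := by
  intro hsum
  have htail : ∀ i ≠ 0, ‖a i * t ^ i‖ ≤ 3⁻¹ := fun i hi => by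
    have hbern : 1 + (i : ℝ) * 8 ≤ 9 ^ i :=
      (one_add_mul_le_pow (by norm_num) i).trans_eq (by norm_num)
    have hi : 3 * (2 * i + 1) ≤ 1 + i * 8 := by omega
    calc ‖a i * t ^ i‖ = ‖a i‖ * ‖t‖ ^ i := by rw [norm_mul, norm_pow]
      _ ≤ (2 * i + 1) * 9⁻¹ ^ i := by gcongr; exact ha i
      _ = (2 * i + 1) / 9 ^ i := by rw [inv_pow, div_eq_mul_inv]
      _ ≤ 3⁻¹ := by
        rw [div_le_iff₀ (by positivity)]
        linarith [(by exact_mod_cast hi : (3 * (2 * i + 1) : ℝ) ≤ 1 + i * 8)]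
  have hdom := norm_le_of_hasSum_zero hsum (by norm_num) 0 htail
  rw [pow_zero, mul_one, h0] at hdom
  norm_num at hdom

lemma eq_of_hasSum_zero_of_norm_coeff_one_eq_three (ha : ∀ i, ‖a i‖ ≤ 2 * i + 1)
    (h1 : ‖a 1‖ = 3) {s t : K} (hs : ‖s‖ ≤ 9⁻¹) (ht : ‖t‖ ≤ 9⁻¹)
    (hsum_s : HasSum (fun i => a i * s ^ i) 0) (hsum_t : HasSum (fun i => a i * t ^ i) 0) :
    s = t := by
  by_contra hst
  have htail : ∀ i ≠ 1, ‖a i * ∑ j ∈ range i, s ^ j * t ^ (i - 1 - j)‖ ≤ 1 := fun i hi => by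
    have hbern : 1 + ((i - 1 : ℕ) : ℝ) * 8 ≤ 9 ^ (i - 1) :=
      (one_add_mul_le_pow (by norm_num) (i - 1)).trans_eq (by norm_num)
    have hi : 2 * i + 1 ≤ 1 + (i - 1) * 8 := by omega
    calc ‖a i * ∑ j ∈ range i, s ^ j * t ^ (i - 1 - j)‖
        ≤ (2 * i + 1) * 9⁻¹ ^ (i - 1) := by
          rw [norm_mul]
          exact mul_le_mul (ha i) (norm_geom_sum₂_le hs ht i) (norm_nonneg _) (by positivity)
      _ = (2 * i + 1) / 9 ^ (i - 1) := by rw [inv_pow, div_eq_mul_inv]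
      _ ≤ 1 := by
        rw [div_le_iff₀ (by positivity), one_mul]
        linarith [(by exact_mod_cast hi : (2 * i + 1 : ℝ) ≤ 1 + ((i - 1 : ℕ) : ℝ) * 8)]
  have hdd := hasSum_mul_geom_sum₂_of_hasSum_zero hst hsum_s hsum_t
  have hdom : ‖a 1 * ∑ j ∈ range 1, s ^ j * t ^ (1 - 1 - j)‖ ≤ 1 :=
    norm_le_of_hasSum_zero hdd zero_le_one 1 htail
  norm_num [h1] at hdom

end EvenSeries

lemma PadicInt.norm_coe_sq_le_of_eq_three_mul {z w : ℤ_[3]} (hz : z = 3 * w) :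
    ‖(z : ℚ_[3]) ^ 2‖ ≤ 9⁻¹ := by
  have h3 : ‖(3 : ℤ_[3])‖ = 3⁻¹ := by exact_mod_cast PadicInt.norm_p (p := 3)
  have hz3 : ‖z‖ ≤ 3⁻¹ := by
    rw [hz, norm_mul, h3]
    exact mul_le_of_le_one_right (by norm_num) w.norm_le_one
  rw [norm_pow, ← PadicInt.norm_def]
  calc ‖z‖ ^ 2 ≤ (3⁻¹ : ℝ) ^ 2 := by gcongr
    _ = 9⁻¹ := by norm_num

/-- Let `F(z) = a₀z + (a₂/3)z³ + (a₄/5)z⁵ + ⋯` with coefficients `a_{2i} ∈ ℤ₃`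
(here `c i = a_{2i}`), converging on `3ℤ₃`, and suppose `a₀` or `a₂` is a unit.
Then `F` has at most three zeroes in the disc `3ℤ₃`. -/
theorem stmt15 (c : ℕ → ℤ_[3]) (F : ℤ_[3] → ℚ_[3])
    (hconv : ∀ z : ℤ_[3], (∃ w, z = 3 * w) →
      HasSum (fun i : ℕ => ((c i : ℚ_[3]) / (2 * i + 1)) * (z : ℚ_[3]) ^ (2 * i + 1)) (F z))
    (hunit : IsUnit (c 0) ∨ IsUnit (c 1)) :
    ∀ s : Finset ℤ_[3], (∀ z ∈ s, (∃ w, z = 3 * w) ∧ F z = 0) → s.card ≤ 3 := by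
  intro s hs
  set a : ℕ → ℚ_[3] := fun i => (c i : ℚ_[3]) / (2 * i + 1)
  have ha : ∀ i, ‖a i‖ ≤ 2 * i + 1 := fun i => by
    have h := (c i).norm_coe_div_natCast_le (n := 2 * i + 1) (by omega)
    push_cast at h
    exact h
  have hdisc : ∀ z ∈ s, ‖(z : ℚ_[3]) ^ 2‖ ≤ 9⁻¹ := fun z hz => by
    obtain ⟨w, hw⟩ := (hs z hz).1
    exact PadicInt.norm_coe_sq_le_of_eq_three_mul hw
  have hzero : ∀ z ∈ s, z ≠ 0 → HasSum (fun i => a i * ((z : ℚ_[3]) ^ 2) ^ i) 0 := by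
    intro z hz hz0
    have hF := hconv z (hs z hz).1
    rw [(hs z hz).2] at hF
    exact hasSum_mul_sq_pow_of_hasSum_mul_odd_pow (PadicInt.coe_ne_zero.mpr hz0) hF
  refine card_le_three_of_sq_eq s fun x hx y hy hx0 hy0 => ?_
  rcases hunit with h0 | h1
  · have ha0 : ‖a 0‖ = 1 := by simpa [a] using PadicInt.isUnit_iff.mp h0
    exact absurd (hzero x hx hx0) (not_hasSum_zero_of_norm_coeff_zero_eq_one ha ha0 (hdisc x hx))
  · have h3 : ‖(3 : ℚ_[3])‖ = 3⁻¹ := by exact_mod_cast Padic.norm_p (p := 3)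
    have ha1 : ‖a 1‖ = 3 := by
      have hc1 : ‖(c 1 : ℚ_[3])‖ = 1 := PadicInt.isUnit_iff.mp h1
      norm_num [a, hc1, h3]
    have hsq := eq_of_hasSum_zero_of_norm_coeff_one_eq_three ha ha1 (hdisc x hx) (hdisc y hy)
      (hzero x hx hx0) (hzero y hy hy0)
    exact PadicInt.ext (by exact_mod_cast hsq)
end
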